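/- Claim (weight-1 errors are decoded in one iteration). Let d ≥ 3 and let e be any error of weight 1 on the toric lattice T_d. Then e is non-degenerate and MS correctly decodes e in 1 iteration, i.e. ê_1 = e (so H ê_1 = He). Moreover, if d ≥ 5, then ê_2 = e as well: the estimate output at the second iteration still equals e. -/

import Mathlib

namespace ToricMS

/-- Checks of the toric lattice: vertices of the `d × d` torus grid. -/
abbrev V (d : ℕ) : Type := ZMod d × ZMod d

/-- The toric lattice `T_d`: two checks are adjacent iff their difference is
`(±1, 0)` or `(0, ±1)` mod `d` (for `d ≥ 3` the inequality clause is automatic). -/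
def Toric (d : ℕ) : SimpleGraph (V d) where
  Adj v w := v ≠ w ∧
    (v - w = (1, 0) ∨ v - w = (-1, 0) ∨ v - w = (0, 1) ∨ v - w = (0, -1))
  symm := by
    refine ⟨?_⟩
    rintro v w ⟨hne, h⟩
    refine ⟨hne.symm, ?_⟩
    have hswap : w - v = -(v - w) := by ring
    rcases h with h | h | h | h <;> rw [hswap, h] <;> simp [Prod.ext_iff]
  loopless := ⟨fun v h => h.1 rfl⟩

/-- Weight of an error: the number of qubits (edges) in error. -/
noncomputable def wt {d : ℕ} (e : (Toric d).edgeSet → ZMod 2) : ℕ :=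
  Nat.card {q : (Toric d).edgeSet // e q = 1}

/-- Syndrome of an error: mod-2 sum of the error over the qubits incident to each check. -/
noncomputable def synd {d : ℕ} (e : (Toric d).edgeSet → ZMod 2) : V d → ZMod 2 :=
  fun c => (Nat.card {q : (Toric d).edgeSet // e q = 1 ∧ c ∈ (q : Sym2 (V d))} : ZMod 2)

/-- A degenerate error: some different error of no larger weight has the same syndrome. -/
def Degenerate {d : ℕ} (e : (Toric d).edgeSet → ZMod 2) : Prop :=
  ∃ e' : (Toric d).edgeSet → ZMod 2, e' ≠ e ∧ wt e' ≤ wt e ∧ synd e' = synd e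

/-- The fake syndrome `s^c` having `c` as its only unsatisfied check. -/
def fakeS (d : ℕ) (c : V d) : V d → ZMod 2 := fun c' => if c' = c then 1 else 0

/-- The error `ε⁴` consisting of 4 consecutive collinear (horizontal) qubits. -/
def eps4 (d : ℕ) : (Toric d).edgeSet → ZMod 2 := fun q =>
  if q.val = Sym2.mk (((0 : ZMod d), (0 : ZMod d)) : V d) ((1, 0) : V d)
      ∨ q.val = Sym2.mk (((1 : ZMod d), (0 : ZMod d)) : V d) ((2, 0) : V d)
      ∨ q.val = Sym2.mk (((2 : ZMod d), (0 : ZMod d)) : V d) ((3, 0) : V d)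
      ∨ q.val = Sym2.mk (((3 : ZMod d), (0 : ZMod d)) : V d) ((4, 0) : V d)
  then 1 else 0

/-- Walk without return (wwr) in `T_d`, as its list of visited checks. -/
def IsWWR (d : ℕ) (l : List (V d)) : Prop :=
  l.Chain' (Toric d).Adj ∧ ∀ j : ℕ, j + 2 < l.length → l[j]? ≠ l[j + 2]?

/-- A walk starting with the root edge `e_q = {a, b}` (either orientation allowed). -/
def StartsQ (d : ℕ) (a b : V d) (l : List (V d)) : Prop :=
  l.take 2 = [a, b] ∨ l.take 2 = [b, a]

/-- Vertices of the decoding tree `T_{i,q}` (`q` the edge `{a,b}`): wwrs of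
length `1, …, i` starting with `e_q`, encoded by their check lists. -/
def IsTreeVertex (d : ℕ) (a b : V d) (i : ℕ) (l : List (V d)) : Prop :=
  IsWWR d l ∧ StartsQ d a b l ∧ 2 ≤ l.length ∧ l.length ≤ i + 1

/-- Edges of the decoding tree `T_{i,q}`: wwrs of length `1, …, i+1` starting with
`e_q` (an edge is identified with the wwr ending with it), where the root edge is
canonically represented by `[a, b]`. -/
def IsTreeEdge (d : ℕ) (a b : V d) (i : ℕ) (l : List (V d)) : Prop :=
  IsWWR d l ∧ StartsQ d a b l ∧ 2 ≤ l.length ∧ l.length ≤ i + 2 ∧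
    (l.length = 2 → l = [a, b])

/-- Dangling edges: tree edges at maximal depth, with a single endpoint in the tree. -/
def IsDangling (d : ℕ) (a b : V d) (i : ℕ) (l : List (V d)) : Prop :=
  IsTreeEdge d a b i l ∧ l.length = i + 2

/-- The check of `T_d` associated with a tree vertex. -/
def vcheck {d : ℕ} (l : List (V d)) : V d := l.getLastD 0

/-- Incidence between a tree vertex and a tree edge. -/
def IncidentVE {d : ℕ} (lv le : List (V d)) : Prop :=
  lv = le ∨ lv = le.dropLast ∨ (le.length = 2 ∧ lv = le.reverse)

/-- A configuration on the decoding tree for syndrome `s`: an edge labelling such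
that around every tree vertex, the mod-2 sum of the labels of the incident edges
equals the syndrome value of the associated check. -/
def IsConfig (d : ℕ) (a b : V d) (i : ℕ) (s : V d → ZMod 2)
    (C : List (V d) → ZMod 2) : Prop :=
  ∀ lv, IsTreeVertex d a b i lv →
    (Nat.card {le : List (V d) //
        IsTreeEdge d a b i le ∧ IncidentVE lv le ∧ C le = 1} : ZMod 2) = s (vcheck lv)

/-- Weight of a configuration: its number of labeled tree edges. -/
noncomputable def cweight (d : ℕ) (a b : V d) (i : ℕ) (C : List (V d) → ZMod 2) : ℕ :=
  Nat.card {le : List (V d) // IsTreeEdge d a b i le ∧ C le = 1}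

/-- Minimal weight of a configuration whose root edge has label `r`. -/
noncomputable def minW (d : ℕ) (a b : V d) (i : ℕ) (s : V d → ZMod 2) (r : ZMod 2) : ℕ :=
  sInf {n : ℕ | ∃ C : List (V d) → ZMod 2,
    IsConfig d a b i s C ∧ C [a, b] = r ∧ cweight d a b i C = n}

/-- A posteriori value of the (oriented) qubit `(a,b)` at iteration `i` computed by
min-sum (Wiberg): minimal root-labeled weight minus minimal root-unlabeled weight. -/
noncomputable def APPo (d : ℕ) (s : V d → ZMod 2) (i : ℕ) (a b : V d) : ℤ :=
  (minW d a b i s 1 : ℤ) - (minW d a b i s 0 : ℤ)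

/-- A posteriori value of a qubit (an unordered edge) at iteration `i`. -/
noncomputable def APP (d : ℕ) (s : V d → ZMod 2) (i : ℕ) : Sym2 (V d) → ℤ :=
  Sym2.lift ⟨fun a b => min (APPo d s i a b) (APPo d s i b a), fun _ _ => min_comm _ _⟩

/-- The MS hard-decision estimate at iteration `i`. -/
noncomputable def hatE (d : ℕ) (s : V d → ZMod 2) (i : ℕ) : (Toric d).edgeSet → ZMod 2 :=
  fun q => if APP d s i q.val < 0 then 1 else 0

/-- `s` is decoded by MS in `k` iterations: the estimate satisfies the syndrome at
iteration `k` and not before. -/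
def DecodedIn (d : ℕ) (s : V d → ZMod 2) (k : ℕ) : Prop :=
  1 ≤ k ∧ synd (hatE d s k) = s ∧ ∀ j, 1 ≤ j → j < k → synd (hatE d s j) ≠ s

/-- The error `e` is correctly decoded by MS. -/
def CorrectlyDecoded {d : ℕ} (e : (Toric d).edgeSet → ZMod 2) : Prop :=
  ∃ k, DecodedIn d (synd e) k ∧ hatE d (synd e) k = e

/-- Length of the longest common prefix of two lists. -/
def cpl {d : ℕ} : List (V d) → List (V d) → ℕ
  | x :: xs, y :: ys => if x = y then cpl xs ys + 1 else 0
  | _, _ => 0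

/-- Distance (number of edges of the connecting path) between two tree vertices. -/
def treeDist {d : ℕ} (lu lv : List (V d)) : ℕ :=
  if lu.take 2 = lv.take 2 then lu.length + lv.length - 2 * cpl lu lv
  else lu.length + lv.length - 3

/-- Strip a dangling edge down to its unique endpoint vertex. -/
def stripD {d : ℕ} (i : ℕ) (l : List (V d)) : List (V d) :=
  if l.length = i + 2 then l.dropLast else l

/-- `le` is an edge on the (unique) tree path between tree vertices `lu` and `lv`. -/
def OnPathVV {d : ℕ} (lu lv le : List (V d)) : Prop :=
  if lu.take 2 = lv.take 2 then (le <+: lu ∨ le <+: lv) ∧ cpl lu lv < le.length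
  else ((le <+: lu ∨ le <+: lv) ∧ 3 ≤ le.length) ∨ le.length = 2

/-- `lw` is a vertex on the (unique) tree path between tree vertices `lu` and `lv`. -/
def OnPathVertexVV {d : ℕ} (lu lv lw : List (V d)) : Prop :=
  if lu.take 2 = lv.take 2 then (lw <+: lu ∨ lw <+: lv) ∧ cpl lu lv ≤ lw.length
  else (lw <+: lu ∨ lw <+: lv) ∧ 2 ≤ lw.length

/-- A link of the decoding tree `T_{i,q}` for syndrome `s`: a path in the tree
whose vertex endpoints (if any) are associated with unsatisfied checks; an
endpoint is either a tree vertex or a dangling edge. -/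
structure Link (d : ℕ) (a b : V d) (i : ℕ) (s : V d → ZMod 2) where
  endA : List (V d)
  endB : List (V d)
  hA : IsTreeVertex d a b i endA ∨ IsDangling d a b i endA
  hB : IsTreeVertex d a b i endB ∨ IsDangling d a b i endB
  hAu : IsTreeVertex d a b i endA → s (vcheck endA) = 1
  hBu : IsTreeVertex d a b i endB → s (vcheck endB) = 1
  hne : endA ≠ endB

variable {d : ℕ} {a b : V d} {i : ℕ} {s : V d → ZMod 2}

/-- The tree edges lying on a link. -/
def Link.on (L : Link d a b i s) (le : List (V d)) : Prop :=
  OnPathVV (stripD i L.endA) (stripD i L.endB) le ∨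
    (L.endA.length = i + 2 ∧ le = L.endA) ∨ (L.endB.length = i + 2 ∧ le = L.endB)

/-- The length (number of edges) of a link. -/
def Link.len (L : Link d a b i s) : ℕ :=
  treeDist (stripD i L.endA) (stripD i L.endB) +
    (if L.endA.length = i + 2 then 1 else 0) + (if L.endB.length = i + 2 then 1 else 0)

/-- A proper link: both endpoints are (unsatisfied) tree vertices. -/
def Link.Proper (L : Link d a b i s) : Prop :=
  IsTreeVertex d a b i L.endA ∧ IsTreeVertex d a b i L.endB

/-- A labeled link (w.r.t. a configuration `C`): all its edges are labeled. -/
def Link.IsLabeled (L : Link d a b i s) (C : List (V d) → ZMod 2) : Prop :=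
  ∀ le, IsTreeEdge d a b i le → L.on le → C le = 1

/-- A maximal labeled link: it cannot be extended into a longer labeled link. -/
def Link.IsMaxLabeled (L : Link d a b i s) (C : List (V d) → ZMod 2) : Prop :=
  L.IsLabeled C ∧
    ∀ L' : Link d a b i s, L'.IsLabeled C → (∀ le, L.on le → L'.on le) → L'.len ≤ L.len

/-- An `I`-link: a proper link of length 4 not containing the root, descending
four levels of the tree. -/
def Link.IsI (L : Link d a b i s) : Prop :=
  L.Proper ∧ L.len = 4 ∧ ¬ L.on [a, b] ∧
    (L.endA.length + 4 = L.endB.length ∨ L.endB.length + 4 = L.endA.length)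

/-- A `Γ`-link: a proper link of length 4 not containing the root, going up one
level then down three. -/
def Link.IsGamma (L : Link d a b i s) : Prop :=
  L.Proper ∧ L.len = 4 ∧ ¬ L.on [a, b] ∧
    (L.endA.length + 2 = L.endB.length ∨ L.endB.length + 2 = L.endA.length)

/-- A `Λ`-link: a proper link of length 4 not containing the root, going up two
levels then down two (its endpoints are at the same depth). -/
def Link.IsLambda (L : Link d a b i s) : Prop :=
  L.Proper ∧ L.len = 4 ∧ ¬ L.on [a, b] ∧ L.endA.length = L.endB.length

/-- Distance of a tree vertex to the bottom: minimal length of a path starting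
at that vertex and ending with a dangling edge. -/
noncomputable def distToBottom (d : ℕ) (a b : V d) (i : ℕ) (lv : List (V d)) : ℕ :=
  sInf {n : ℕ | ∃ le, IsDangling d a b i le ∧ n = treeDist lv le.dropLast + 1}

/-- A walk in the decoding tree: a sequence of tree edges `es` together with the
sequence `vs` of tree vertices through which consecutive edges are traversed. -/
structure TreeWalk (d : ℕ) (a b : V d) (i : ℕ) where
  es : List (List (V d))
  vs : List (List (V d))
  hlen : vs.length + 1 = es.length
  hes : ∀ le ∈ es, IsTreeEdge d a b i le
  hvs : ∀ lv ∈ vs, IsTreeVertex d a b i lv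
  hinc : ∀ (j : ℕ) (hj : j < vs.length),
    IncidentVE (vs[j]'hj) (es[j]'(by omega)) ∧ IncidentVE (vs[j]'hj) (es[j + 1]'(by omega))
  htrav : ∀ (j : ℕ) (hj : j + 1 < vs.length), vs[j]'(by omega) ≠ vs[j + 1]'hj

/-- The four unit directions of the square lattice. -/
def dirVec (d : ℕ) : Fin 4 → V d := ![(1, 0), (0, 1), (-1, 0), (0, -1)]

/-- A rigid embedding of a patch `K` of `T_d` into `T_{d'}`: an injective map
which, up to a fixed symmetry `g` of the square (an element of the dihedral
group acting on the four directions), preserves the local square-lattice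
structure — hence it is an injective graph homomorphism mapping plaquettes to
plaquettes. -/
def IsRigidEmbed (d d' : ℕ) (K : Set (V d)) (φ : V d → V d') : Prop :=
  Set.InjOn φ K ∧ ∃ g : Fin 4 → Fin 4, Function.Bijective g ∧
    (∀ j, g (j + 2) = g j + 2) ∧
    ∀ x ∈ K, ∀ j : Fin 4, x + dirVec d j ∈ K →
      φ (x + dirVec d j) = φ x + dirVec d' (g j)

/-- The embedding of a syndrome under an embedding map `φ`. -/
noncomputable def embedSynd (d d' : ℕ) (s : V d → ZMod 2) (φ : V d → V d') :
    V d' → ZMod 2 :=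
  fun c' => @ite _ (∃ c, s c = 1 ∧ φ c = c') (Classical.propDecidable _) 1 0


/-! ### Infrastructure -/

section Infra
variable {d : ℕ}

lemma zmod_ne_one_iff (a : ZMod 2) : a ≠ 1 ↔ a = 0 := by revert a; decide

lemma one_ne_zero' (hd : 3 ≤ d) : (1 : ZMod d) ≠ 0 := by
  haveI : NeZero d := ⟨by omega⟩
  intro h
  have h2 := (ZMod.natCast_eq_zero_iff 1 d).mp (by exact_mod_cast h)
  have := Nat.le_of_dvd one_pos h2
  omega

lemma two_ne_zero' (hd : 3 ≤ d) : (2 : ZMod d) ≠ 0 := by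
  haveI : NeZero d := ⟨by omega⟩
  intro h
  have h2 := (ZMod.natCast_eq_zero_iff 2 d).mp (by exact_mod_cast h)
  have := Nat.le_of_dvd two_pos h2
  omega

lemma adj_add_right (hd : 3 ≤ d) (c : V d) : (Toric d).Adj c (c + (1, 0)) := by
  constructor
  · intro h
    have : ((1,0) : V d) = 0 := by
      have := congrArg (· - c) h; simpa using this.symm
    exact one_ne_zero' hd (congrArg Prod.fst this)
  · right; left; ext <;> simp
lemma adj_add_up (hd : 3 ≤ d) (c : V d) : (Toric d).Adj c (c + (0, 1)) := by
  constructor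
  · intro h
    have : ((0,1) : V d) = 0 := by
      have := congrArg (· - c) h; simpa using this.symm
    exact one_ne_zero' hd (congrArg Prod.snd this)
  · right; right; right; ext <;> simp

/-- a canonical neighbour of `c` distinct from `v`. -/
def pick (v c : V d) : V d := if c + (1,0) = v then c + (0,1) else c + (1,0)

lemma pick_adj (hd : 3 ≤ d) (v c : V d) : (Toric d).Adj c (pick v c) := by
  unfold pick; split
  · exact adj_add_up hd c
  · exact adj_add_right hd c

lemma pick_ne (hd : 3 ≤ d) (v c : V d) : pick v c ≠ v := by
  unfold pick; split
  · intro h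
    rename_i h1
    rw [← h1] at h
    have h3 : ((0,1) : V d) = (1,0) := by
      have := congrArg (· - c) h; simpa using this
    have h4 : (0 : ZMod d) = 1 := congrArg Prod.fst h3
    exact one_ne_zero' hd h4.symm
  · exact fun h => by simp_all

end Infra

/-! ### Classification of tree vertices and edges for i = 1, 2 -/

section Classify
variable {d : ℕ} {x y : V d}

lemma isWWR_pair {u v : V d} : IsWWR d [u, v] ↔ (Toric d).Adj u v := by
  constructor
  · rintro ⟨hc, _⟩
    simpa [List.Chain'] using hc
  · intro h
    refine ⟨by simpa [List.Chain'] using h, ?_⟩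
    intro j hj
    simp only [List.length_cons, List.length_nil] at hj
    omega

lemma isWWR_triple {u v c : V d} :
    IsWWR d [u, v, c] ↔ (Toric d).Adj u v ∧ (Toric d).Adj v c ∧ u ≠ c := by
  constructor
  · rintro ⟨hc, hw⟩
    simp [List.Chain', List.isChain_cons_cons] at hc
    refine ⟨hc.1, hc.2, ?_⟩
    have := hw 0 (by simp)
    simpa using this
  · rintro ⟨h1, h2, h3⟩
    refine ⟨by simp [List.Chain', List.isChain_cons_cons]; exact ⟨h1, h2⟩, ?_⟩
    intro j hj
    simp only [List.length_cons, List.length_nil] at hj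
    have hj2 : j = 0 := by omega
    subst hj2
    simpa using h3
  
lemma isWWR_quad {u v c z : V d} :
    IsWWR d [u, v, c, z] ↔ (Toric d).Adj u v ∧ (Toric d).Adj v c ∧ (Toric d).Adj c z
      ∧ u ≠ c ∧ v ≠ z := by
  constructor
  · rintro ⟨hc, hw⟩
    simp [List.Chain', List.isChain_cons_cons] at hc
    refine ⟨hc.1, hc.2.1, hc.2.2, ?_, ?_⟩
    · have := hw 0 (by simp); simpa using this
    · have := hw 1 (by simp); simpa using this
  · rintro ⟨h1, h2, h3, h4, h5⟩
    refine ⟨by simp [List.Chain', List.isChain_cons_cons]; exact ⟨h1, h2, h3⟩, ?_⟩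
    intro j hj
    simp only [List.length_cons, List.length_nil] at hj
    have hj2 : j = 0 ∨ j = 1 := by omega
    rcases hj2 with rfl | rfl
    · simpa using h4
    · simpa using h5

lemma startsQ_pair {u v : V d} : StartsQ d x y [u, v] ↔ (u = x ∧ v = y) ∨ (u = y ∧ v = x) := by
  unfold StartsQ
  constructor
  · rintro (h | h) <;> simp at h <;> tauto
  · rintro (⟨h1, h2⟩ | ⟨h1, h2⟩) <;> subst h1 <;> subst h2 <;> simp

lemma startsQ_cons {u v : V d} {r : List (V d)} :
    StartsQ d x y (u :: v :: r) ↔ (u = x ∧ v = y) ∨ (u = y ∧ v = x) := by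
  unfold StartsQ
  constructor
  · rintro (h | h) <;> simp at h <;> tauto
  · rintro (⟨h1, h2⟩ | ⟨h1, h2⟩) <;> subst h1 <;> subst h2 <;> simp

lemma tv1_iff (hxy : (Toric d).Adj x y) {l : List (V d)} :
    IsTreeVertex d x y 1 l ↔ l = [x, y] ∨ l = [y, x] := by
  constructor
  · rintro ⟨hw, hs, h1, h2⟩
    match l with
    | [u, v] =>
      rcases startsQ_cons.mp hs with ⟨rfl, rfl⟩ | ⟨rfl, rfl⟩
      · left; rfl
      · right; rfl
    | [] | [_] => simp at h1
    | _ :: _ :: _ :: _ => simp only [List.length_cons] at h2; omega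
  · rintro (rfl | rfl)
    · exact ⟨isWWR_pair.mpr hxy, startsQ_cons.mpr (by tauto), by simp, by simp⟩
    · exact ⟨isWWR_pair.mpr hxy.symm, startsQ_cons.mpr (by tauto), by simp, by simp⟩

lemma tv2_iff (hxy : (Toric d).Adj x y) {l : List (V d)} :
    IsTreeVertex d x y 2 l ↔ l = [x, y] ∨ l = [y, x] ∨
      (∃ c, l = [x, y, c] ∧ (Toric d).Adj y c ∧ c ≠ x) ∨
      (∃ c, l = [y, x, c] ∧ (Toric d).Adj x c ∧ c ≠ y) := by
  constructor
  · rintro ⟨hw, hs, h1, h2⟩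
    match l with
    | [u, v] =>
      rcases startsQ_cons.mp hs with ⟨rfl, rfl⟩ | ⟨rfl, rfl⟩
      · left; rfl
      · right; left; rfl
    | [u, v, c] =>
      obtain ⟨-, h2, h3⟩ := isWWR_triple.mp hw
      rcases startsQ_cons.mp hs with ⟨rfl, rfl⟩ | ⟨rfl, rfl⟩
      · exact Or.inr (Or.inr (Or.inl ⟨c, rfl, h2, fun h => h3 h.symm⟩))
      · exact Or.inr (Or.inr (Or.inr ⟨c, rfl, h2, fun h => h3 h.symm⟩))
    | [] | [_] => simp at h1
    | _ :: _ :: _ :: _ :: _ => simp only [List.length_cons] at h2; omega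
  · rintro (rfl | rfl | ⟨c, rfl, hc1, hc2⟩ | ⟨c, rfl, hc1, hc2⟩)
    · exact ⟨isWWR_pair.mpr hxy, startsQ_cons.mpr (by tauto), by simp, by simp⟩
    · exact ⟨isWWR_pair.mpr hxy.symm, startsQ_cons.mpr (by tauto), by simp, by simp⟩
    · exact ⟨isWWR_triple.mpr ⟨hxy, hc1, fun h => hc2 h.symm⟩,
        startsQ_cons.mpr (by tauto), by simp, by simp⟩
    · exact ⟨isWWR_triple.mpr ⟨hxy.symm, hc1, fun h => hc2 h.symm⟩,
        startsQ_cons.mpr (by tauto), by simp, by simp⟩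

lemma te1_iff (hxy : (Toric d).Adj x y) {l : List (V d)} :
    IsTreeEdge d x y 1 l ↔ l = [x, y] ∨
      (∃ c, l = [x, y, c] ∧ (Toric d).Adj y c ∧ c ≠ x) ∨
      (∃ c, l = [y, x, c] ∧ (Toric d).Adj x c ∧ c ≠ y) := by
  constructor
  · rintro ⟨hw, hs, h1, h2, h3⟩
    match l with
    | [u, v] => exact Or.inl (h3 rfl)
    | [u, v, c] =>
      obtain ⟨-, hb, hc⟩ := isWWR_triple.mp hw
      rcases startsQ_cons.mp hs with ⟨rfl, rfl⟩ | ⟨rfl, rfl⟩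
      · exact Or.inr (Or.inl ⟨c, rfl, hb, fun h => hc h.symm⟩)
      · exact Or.inr (Or.inr ⟨c, rfl, hb, fun h => hc h.symm⟩)
    | [] | [_] => simp at h1
    | _ :: _ :: _ :: _ :: _ => simp only [List.length_cons] at h2; omega
  · rintro (rfl | ⟨c, rfl, hc1, hc2⟩ | ⟨c, rfl, hc1, hc2⟩)
    · exact ⟨isWWR_pair.mpr hxy, startsQ_cons.mpr (by tauto), by simp, by simp, fun _ => rfl⟩
    · exact ⟨isWWR_triple.mpr ⟨hxy, hc1, fun h => hc2 h.symm⟩,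
        startsQ_cons.mpr (by tauto), by simp, by simp, by simp⟩
    · exact ⟨isWWR_triple.mpr ⟨hxy.symm, hc1, fun h => hc2 h.symm⟩,
        startsQ_cons.mpr (by tauto), by simp, by simp, by simp⟩

lemma te2_iff (hxy : (Toric d).Adj x y) {l : List (V d)} :
    IsTreeEdge d x y 2 l ↔ l = [x, y] ∨
      (∃ c, l = [x, y, c] ∧ (Toric d).Adj y c ∧ c ≠ x) ∨
      (∃ c, l = [y, x, c] ∧ (Toric d).Adj x c ∧ c ≠ y) ∨
      (∃ c z, l = [x, y, c, z] ∧ (Toric d).Adj y c ∧ c ≠ x ∧ (Toric d).Adj c z ∧ z ≠ y) ∨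
      (∃ c z, l = [y, x, c, z] ∧ (Toric d).Adj x c ∧ c ≠ y ∧ (Toric d).Adj c z ∧ z ≠ x) := by
  constructor
  · rintro ⟨hw, hs, h1, h2, h3⟩
    match l with
    | [u, v] => exact Or.inl (h3 rfl)
    | [u, v, c] =>
      obtain ⟨-, hb, hc⟩ := isWWR_triple.mp hw
      rcases startsQ_cons.mp hs with ⟨rfl, rfl⟩ | ⟨rfl, rfl⟩
      · exact Or.inr (Or.inl ⟨c, rfl, hb, fun h => hc h.symm⟩)
      · exact Or.inr (Or.inr (Or.inl ⟨c, rfl, hb, fun h => hc h.symm⟩))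
    | [u, v, c, z] =>
      obtain ⟨-, hb, hc, hd', he⟩ := isWWR_quad.mp hw
      rcases startsQ_cons.mp hs with ⟨rfl, rfl⟩ | ⟨rfl, rfl⟩
      · exact Or.inr (Or.inr (Or.inr (Or.inl
          ⟨c, z, rfl, hb, fun h => hd' h.symm, hc, fun h => he h.symm⟩)))
      · exact Or.inr (Or.inr (Or.inr (Or.inr
          ⟨c, z, rfl, hb, fun h => hd' h.symm, hc, fun h => he h.symm⟩)))
    | [] | [_] => simp at h1
    | _ :: _ :: _ :: _ :: _ :: _ => simp only [List.length_cons] at h2; omega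
  · rintro (rfl | ⟨c, rfl, hc1, hc2⟩ | ⟨c, rfl, hc1, hc2⟩ |
      ⟨c, z, rfl, hc1, hc2, hz1, hz2⟩ | ⟨c, z, rfl, hc1, hc2, hz1, hz2⟩)
    · exact ⟨isWWR_pair.mpr hxy, startsQ_cons.mpr (by tauto), by simp, by simp, fun _ => rfl⟩
    · exact ⟨isWWR_triple.mpr ⟨hxy, hc1, fun h => hc2 h.symm⟩,
        startsQ_cons.mpr (by tauto), by simp, by simp, by simp⟩
    · exact ⟨isWWR_triple.mpr ⟨hxy.symm, hc1, fun h => hc2 h.symm⟩,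
        startsQ_cons.mpr (by tauto), by simp, by simp, by simp⟩
    · exact ⟨isWWR_quad.mpr ⟨hxy, hc1, hz1, fun h => hc2 h.symm, fun h => hz2 h.symm⟩,
        startsQ_cons.mpr (by tauto), by simp, by simp, by simp⟩
    · exact ⟨isWWR_quad.mpr ⟨hxy.symm, hc1, hz1, fun h => hc2 h.symm, fun h => hz2 h.symm⟩,
        startsQ_cons.mpr (by tauto), by simp, by simp, by simp⟩

end Classify

/-! ### Cardinality and finiteness infrastructure -/

section CardInfra
variable {d : ℕ}

lemma card0 {α : Type*} {P : α → Prop} (h : ∀ a, ¬ P a) : Nat.card {a // P a} = 0 := by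
  haveI : IsEmpty {a // P a} := ⟨fun a => h a.1 a.2⟩
  exact Nat.card_of_isEmpty

lemma card1 {α : Type*} {P : α → Prop} {a0 : α} (h : ∀ a, P a ↔ a = a0) :
    Nat.card {a // P a} = 1 :=
  Nat.card_eq_one_iff_exists.mpr
    ⟨⟨a0, (h a0).mpr rfl⟩, fun b => Subtype.ext ((h _).mp b.2)⟩

lemma card2 {α : Type*} {P : α → Prop} {a0 b0 : α} (hne : a0 ≠ b0)
    (h : ∀ a, P a ↔ a = a0 ∨ a = b0) : Nat.card {a // P a} = 2 := by
  have h1 : Nat.card {a // P a} = Set.ncard {a | P a} := Nat.card_coe_set_eq _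
  have h2 : {a | P a} = ({a0, b0} : Set α) := Set.ext fun a => by simpa using h a
  rw [h1, h2, Set.ncard_pair hne]

lemma one_le_card {α : Type*} {P : α → Prop} (hfin : {a | P a}.Finite) {a0 : α}
    (ha : P a0) : 1 ≤ Nat.card {a // P a} := by
  have h1 : Nat.card {a // P a} = Set.ncard {a | P a} := Nat.card_coe_set_eq _
  rw [h1]
  exact (Set.ncard_pos hfin).mpr ⟨a0, ha⟩

lemma two_le_card {α : Type*} {P : α → Prop} (hfin : {a | P a}.Finite) {a0 b0 : α}
    (ha : P a0) (hb : P b0) (hne : a0 ≠ b0) : 2 ≤ Nat.card {a // P a} := by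
  have h1 : Nat.card {a // P a} = Set.ncard {a | P a} := Nat.card_coe_set_eq _
  rw [h1]
  exact (Set.one_lt_ncard_iff hfin).mpr ⟨a0, b0, ha, hb, hne⟩

lemma exists_of_card_odd {α : Type*} {P : α → Prop}
    (h : (Nat.card {a // P a} : ZMod 2) = 1) : ∃ a, P a := by
  by_contra hc
  push_neg at hc
  rw [card0 hc] at h
  simp at h

lemma finite_te (hd : 3 ≤ d) (x y : V d) (i : ℕ) :
    {l : List (V d) | IsTreeEdge d x y i l}.Finite := by
  haveI : NeZero d := ⟨by omega⟩
  apply Set.Finite.subset (List.finite_length_le (V d) (i + 2))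
  intro l hl
  exact hl.2.2.2.1

/-- All tree edges, as a finset. -/
noncomputable def TEF (hd : 3 ≤ d) (x y : V d) (i : ℕ) : Finset (List (V d)) :=
  (finite_te hd x y i).toFinset

lemma mem_TEF {hd : 3 ≤ d} {x y : V d} {i : ℕ} {l : List (V d)} :
    l ∈ TEF hd x y i ↔ IsTreeEdge d x y i l := Set.Finite.mem_toFinset _

open scoped Classical in
lemma cweight_eq (hd : 3 ≤ d) (x y : V d) (i : ℕ) (C : List (V d) → ZMod 2) :
    cweight d x y i C = ((TEF hd x y i).filter (fun le => C le = 1)).card := by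
  unfold cweight
  have h2 : {le : List (V d) | IsTreeEdge d x y i le ∧ C le = 1}
      = ↑((TEF hd x y i).filter (fun le => C le = 1)) := by
    ext le; simp [mem_TEF]
  have h1 : Nat.card {le // IsTreeEdge d x y i le ∧ C le = 1}
      = Set.ncard {le : List (V d) | IsTreeEdge d x y i le ∧ C le = 1} :=
    Nat.card_coe_set_eq _
  rw [h1, h2, Set.ncard_coe_finset]

open scoped Classical in
lemma sum_eq_card_filter {α : Type*} (F : Finset α) (C : α → ZMod 2) :
    ∑ le ∈ F, C le = (((F.filter (fun le => C le = 1)).card : ℕ) : ZMod 2) := by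
  rw [← Finset.sum_filter_add_sum_filter_not F (fun le => C le = 1) C]
  have h1 : ∑ le ∈ F.filter (fun le => C le = 1), C le
      = ∑ _le ∈ F.filter (fun le => C le = 1), (1 : ZMod 2) :=
    Finset.sum_congr rfl fun le hle => by simpa using (Finset.mem_filter.mp hle).2
  have h2 : ∑ le ∈ F.filter (fun le => ¬ C le = 1), C le = 0 :=
    Finset.sum_eq_zero fun le hle =>
      (zmod_ne_one_iff _).mp (Finset.mem_filter.mp hle).2
  rw [h1, h2, Finset.sum_const]
  simp

open scoped Classical in
lemma card_inc_eq_sum (hd : 3 ≤ d) {x y : V d} {i : ℕ} (lv : List (V d))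
    (C : List (V d) → ZMod 2) :
    ((Nat.card {le // IsTreeEdge d x y i le ∧ IncidentVE lv le ∧ C le = 1} : ℕ) : ZMod 2)
      = ∑ le ∈ (TEF hd x y i).filter (fun le => IncidentVE lv le), C le := by
  rw [sum_eq_card_filter]
  congr 1
  have h2 : {le : List (V d) | IsTreeEdge d x y i le ∧ IncidentVE lv le ∧ C le = 1}
      = ↑(((TEF hd x y i).filter (fun le => IncidentVE lv le)).filter (fun le => C le = 1)) := by
    ext le; simp [mem_TEF]; tauto
  have h1 : Nat.card {le // IsTreeEdge d x y i le ∧ IncidentVE lv le ∧ C le = 1}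
      = Set.ncard {le : List (V d) | IsTreeEdge d x y i le ∧ IncidentVE lv le ∧ C le = 1} :=
    Nat.card_coe_set_eq _
  rw [h1, h2, Set.ncard_coe_finset]

open scoped Classical in
lemma isConfig_iff (hd : 3 ≤ d) {x y : V d} {i : ℕ} (s : V d → ZMod 2)
    (C : List (V d) → ZMod 2) :
    IsConfig d x y i s C ↔ ∀ lv, IsTreeVertex d x y i lv →
      ∑ le ∈ (TEF hd x y i).filter (fun le => IncidentVE lv le), C le = s (vcheck lv) := by
  unfold IsConfig
  constructor
  · intro h lv hlv; rw [← card_inc_eq_sum hd lv C]; exact h lv hlv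
  · intro h lv hlv; rw [card_inc_eq_sum hd lv C]; exact h lv hlv

end CardInfra

/-! ### Incidence helpers -/

section Inc
variable {d : ℕ} {x y : V d}

lemma vcheck_pair (u v : V d) : vcheck [u, v] = v := rfl
lemma vcheck_triple (u v c : V d) : vcheck [u, v, c] = c := rfl

lemma inc_root_self : IncidentVE (d := d) [x, y] [x, y] := Or.inl rfl
lemma inc_root_rev : IncidentVE (d := d) [y, x] [x, y] :=
  Or.inr (Or.inr ⟨rfl, by simp⟩)
lemma inc_drop3 (c : V d) : IncidentVE (d := d) [x, y] [x, y, c] :=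
  Or.inr (Or.inl (by simp))
lemma inc_self3 (c : V d) : IncidentVE (d := d) [x, y, c] [x, y, c] := Or.inl rfl
lemma inc_drop4 (c z : V d) : IncidentVE (d := d) [x, y, c] [x, y, c, z] :=
  Or.inr (Or.inl (by simp))

lemma not_inc_xyc_root (hne : x ≠ y) (c : V d) : ¬ IncidentVE (d := d) [x, y, c] [x, y] := by
  rintro (h | h | ⟨h1, h2⟩) <;> simp_all

/-- Edges incident to the vertex `[x,y]` in the depth-1 tree. -/
lemma inc1_xy (hxy : (Toric d).Adj x y) {le : List (V d)}
    (hte : IsTreeEdge d x y 1 le) (hinc : IncidentVE [x, y] le) :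
    le = [x, y] ∨ ∃ c, le = [x, y, c] ∧ (Toric d).Adj y c ∧ c ≠ x := by
  have hne : x ≠ y := hxy.ne
  rcases (te1_iff hxy).mp hte with rfl | ⟨c, rfl, hc⟩ | ⟨c, rfl, hc⟩
  · exact Or.inl rfl
  · exact Or.inr ⟨c, rfl, hc⟩
  · exfalso; rcases hinc with h | h | ⟨h1, h2⟩ <;> simp_all

lemma inc1_yx (hxy : (Toric d).Adj x y) {le : List (V d)}
    (hte : IsTreeEdge d x y 1 le) (hinc : IncidentVE [y, x] le) :
    le = [x, y] ∨ ∃ c, le = [y, x, c] ∧ (Toric d).Adj x c ∧ c ≠ y := by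
  have hne : x ≠ y := hxy.ne
  rcases (te1_iff hxy).mp hte with rfl | ⟨c, rfl, hc⟩ | ⟨c, rfl, hc⟩
  · exact Or.inl rfl
  · exfalso; rcases hinc with h | h | ⟨h1, h2⟩ <;> simp_all
  · exact Or.inr ⟨c, rfl, hc⟩

lemma inc2_xy (hxy : (Toric d).Adj x y) {le : List (V d)}
    (hte : IsTreeEdge d x y 2 le) (hinc : IncidentVE [x, y] le) :
    le = [x, y] ∨ ∃ c, le = [x, y, c] ∧ (Toric d).Adj y c ∧ c ≠ x := by
  have hne : x ≠ y := hxy.ne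
  rcases (te2_iff hxy).mp hte with rfl | ⟨c, rfl, hc⟩ | ⟨c, rfl, hc⟩ |
    ⟨c, z, rfl, hc⟩ | ⟨c, z, rfl, hc⟩
  · exact Or.inl rfl
  · exact Or.inr ⟨c, rfl, hc⟩
  all_goals exfalso; rcases hinc with h | h | ⟨h1, h2⟩ <;> simp_all

lemma inc2_yx (hxy : (Toric d).Adj x y) {le : List (V d)}
    (hte : IsTreeEdge d x y 2 le) (hinc : IncidentVE [y, x] le) :
    le = [x, y] ∨ ∃ c, le = [y, x, c] ∧ (Toric d).Adj x c ∧ c ≠ y := by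
  have hne : x ≠ y := hxy.ne
  rcases (te2_iff hxy).mp hte with rfl | ⟨c, rfl, hc⟩ | ⟨c, rfl, hc⟩ |
    ⟨c, z, rfl, hc⟩ | ⟨c, z, rfl, hc⟩
  · exact Or.inl rfl
  · exfalso; rcases hinc with h | h | ⟨h1, h2⟩ <;> simp_all
  · exact Or.inr ⟨c, rfl, hc⟩
  all_goals exfalso; rcases hinc with h | h | ⟨h1, h2⟩ <;> simp_all

lemma inc2_xyc (hxy : (Toric d).Adj x y) {c : V d} {le : List (V d)}
    (hte : IsTreeEdge d x y 2 le) (hinc : IncidentVE [x, y, c] le) :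
    le = [x, y, c] ∨ ∃ z, le = [x, y, c, z] ∧ (Toric d).Adj c z ∧ z ≠ y := by
  have hne : x ≠ y := hxy.ne
  rcases (te2_iff hxy).mp hte with rfl | ⟨c', rfl, hc⟩ | ⟨c', rfl, hc⟩ |
    ⟨c', z, rfl, hc1, hc2, hz1, hz2⟩ | ⟨c', z, rfl, hc⟩
  · exfalso; rcases hinc with h | h | ⟨h1, h2⟩ <;> simp_all
  · rcases hinc with h | h | ⟨h1, h2⟩
    · simp at h; exact Or.inl (by simp [h])
    · simp at h
    · simp at h1
  · exfalso; rcases hinc with h | h | ⟨h1, h2⟩ <;> simp_all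
  · rcases hinc with h | h | ⟨h1, h2⟩
    · simp at h
    · simp at h
      rcases h with ⟨rfl, rfl⟩
      exact Or.inr ⟨z, rfl, hz1, hz2⟩
    · simp at h1
  · exfalso; rcases hinc with h | h | ⟨h1, h2⟩ <;> simp_all

lemma inc2_yxc (hxy : (Toric d).Adj x y) {c : V d} {le : List (V d)}
    (hte : IsTreeEdge d x y 2 le) (hinc : IncidentVE [y, x, c] le) :
    le = [y, x, c] ∨ ∃ z, le = [y, x, c, z] ∧ (Toric d).Adj c z ∧ z ≠ x := by
  have hne : x ≠ y := hxy.ne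
  rcases (te2_iff hxy).mp hte with rfl | ⟨c', rfl, hc⟩ | ⟨c', rfl, hc⟩ |
    ⟨c', z, rfl, hc⟩ | ⟨c', z, rfl, hc1, hc2, hz1, hz2⟩
  · exfalso; rcases hinc with h | h | ⟨h1, h2⟩ <;> simp_all
  · exfalso; rcases hinc with h | h | ⟨h1, h2⟩ <;> simp_all
  · rcases hinc with h | h | ⟨h1, h2⟩
    · simp at h; exact Or.inl (by simp [h])
    · simp at h
    · simp at h1
  · exfalso; rcases hinc with h | h | ⟨h1, h2⟩ <;> simp_all
  · rcases hinc with h | h | ⟨h1, h2⟩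
    · simp at h
    · simp at h
      rcases h with ⟨rfl, rfl⟩
      exact Or.inr ⟨z, rfl, hz1, hz2⟩
    · simp at h1

end Inc

/-! ### The generic configuration -/

section Cgen
variable {d : ℕ}

lemma zmod2_cases (a : ZMod 2) : a = 0 ∨ a = 1 := by revert a; decide

/-- Label of the child edge `[·, v, c]`. -/
def Pg (s : V d → ZMod 2) (x y : V d) (r : ZMod 2) : V d → V d → ZMod 2 := fun v c =>
  if v = y ∧ s y ≠ r ∧ c = pick x y then 1
  else if v = x ∧ s x ≠ r ∧ c = pick y x then 1 else 0

/-- The generic configuration with root label `r` (works for depth 1 and 2). -/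
def Cg (s : V d → ZMod 2) (x y : V d) (r : ZMod 2) : List (V d) → ZMod 2 := fun le =>
  if le.length = 2 then r
  else if le.length = 3 then Pg s x y r (le.getD 1 0) (le.getD 2 0)
  else if le.length = 4 then
    (if le.getD 3 0 = pick (le.getD 1 0) (le.getD 2 0)
        ∧ Pg s x y r (le.getD 1 0) (le.getD 2 0) ≠ s (le.getD 2 0) then 1 else 0)
  else 0

variable {s : V d → ZMod 2} {x y : V d} {r : ZMod 2}

lemma Cg_pair (u v : V d) : Cg s x y r [u, v] = r := by simp [Cg]

lemma Cg_triple (u v c : V d) : Cg s x y r [u, v, c] = Pg s x y r v c := by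
  simp [Cg, List.getD]

lemma Cg_quad (u v c z : V d) : Cg s x y r [u, v, c, z]
    = (if z = pick v c ∧ Pg s x y r v c ≠ s c then 1 else 0) := by
  simp [Cg, List.getD]

lemma Pg_y (hne : x ≠ y) (c : V d) :
    Pg s x y r y c = if s y ≠ r ∧ c = pick x y then 1 else 0 := by
  simp [Pg, hne.symm]

lemma Pg_x (hne : x ≠ y) (c : V d) :
    Pg s x y r x c = if s x ≠ r ∧ c = pick y x then 1 else 0 := by
  simp [Pg, hne]

end Cgen

/-! ### Tree edge introduction rules -/

section TEIntro
variable {d : ℕ} {x y : V d}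

lemma te_root (hxy : (Toric d).Adj x y) (i : ℕ) : IsTreeEdge d x y i [x, y] :=
  ⟨isWWR_pair.mpr hxy, startsQ_cons.mpr (by tauto), by simp, by simp only [List.length_cons, List.length_nil]; omega, fun _ => rfl⟩

lemma te_child_y (hxy : (Toric d).Adj x y) {c : V d} (hc : (Toric d).Adj y c)
    (hcx : c ≠ x) {i : ℕ} (hi : 1 ≤ i) : IsTreeEdge d x y i [x, y, c] :=
  ⟨isWWR_triple.mpr ⟨hxy, hc, fun h => hcx h.symm⟩, startsQ_cons.mpr (by tauto),
    by simp, by simp only [List.length_cons, List.length_nil]; omega, by simp⟩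

lemma te_child_x (hxy : (Toric d).Adj x y) {c : V d} (hc : (Toric d).Adj x c)
    (hcy : c ≠ y) {i : ℕ} (hi : 1 ≤ i) : IsTreeEdge d x y i [y, x, c] :=
  ⟨isWWR_triple.mpr ⟨hxy.symm, hc, fun h => hcy h.symm⟩, startsQ_cons.mpr (by tauto),
    by simp, by simp only [List.length_cons, List.length_nil]; omega, by simp⟩

lemma te_dang_y (hxy : (Toric d).Adj x y) {c z : V d} (hc : (Toric d).Adj y c)
    (hcx : c ≠ x) (hz : (Toric d).Adj c z) (hzy : z ≠ y) : IsTreeEdge d x y 2 [x, y, c, z] :=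
  ⟨isWWR_quad.mpr ⟨hxy, hc, hz, fun h => hcx h.symm, fun h => hzy h.symm⟩,
    startsQ_cons.mpr (by tauto), by simp, by simp, by simp⟩

lemma te_dang_x (hxy : (Toric d).Adj x y) {c z : V d} (hc : (Toric d).Adj x c)
    (hcy : c ≠ y) (hz : (Toric d).Adj c z) (hzx : z ≠ x) : IsTreeEdge d x y 2 [y, x, c, z] :=
  ⟨isWWR_quad.mpr ⟨hxy.symm, hc, hz, fun h => hcy h.symm, fun h => hzx h.symm⟩,
    startsQ_cons.mpr (by tauto), by simp, by simp, by simp⟩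

end TEIntro

/-! ### The generic configuration is a configuration -/

section CgConfig
variable {d : ℕ} {s : V d → ZMod 2} {x y : V d} {r : ZMod 2}

lemma card_vertex_y (hd : 3 ≤ d) (hxy : (Toric d).Adj x y) {i : ℕ} (hi : 1 ≤ i)
    (hclass : ∀ le, IsTreeEdge d x y i le → IncidentVE [x, y] le →
      le = [x, y] ∨ ∃ c, le = [x, y, c] ∧ (Toric d).Adj y c ∧ c ≠ x) :
    ((Nat.card {le // IsTreeEdge d x y i le ∧ IncidentVE [x, y] le
      ∧ Cg s x y r le = 1} : ℕ) : ZMod 2) = s y := by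
  have hne : x ≠ y := hxy.ne
  by_cases hsy : s y = r
  · by_cases hr1 : r = 1
    · rw [card1 (a0 := [x, y]) ?_]
      · rw [hsy, hr1]; simp
      · intro le
        constructor
        · rintro ⟨hte, hinc, h1⟩
          rcases hclass le hte hinc with rfl | ⟨c, rfl, hc1, hc2⟩
          · rfl
          · rw [Cg_triple, Pg_y hne] at h1
            simp [hsy] at h1
        · rintro rfl
          exact ⟨te_root hxy i, inc_root_self, by rw [Cg_pair]; exact hr1⟩
    · have hr0 : r = 0 := (zmod_ne_one_iff r).mp hr1
      rw [card0 ?_]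
      · rw [hsy, hr0]; simp
      · rintro le ⟨hte, hinc, h1⟩
        rcases hclass le hte hinc with rfl | ⟨c, rfl, hc1, hc2⟩
        · rw [Cg_pair, hr0] at h1; simp at h1
        · rw [Cg_triple, Pg_y hne] at h1
          simp [hsy] at h1
  · have hmem : ∀ le, (IsTreeEdge d x y i le ∧ IncidentVE [x, y] le ∧ Cg s x y r le = 1
        ∧ le ≠ [x, y]) ↔ le = [x, y, pick x y] := by
      intro le
      constructor
      · rintro ⟨hte, hinc, h1, hne2⟩
        rcases hclass le hte hinc with rfl | ⟨c, rfl, hc1, hc2⟩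
        · exact absurd rfl hne2
        · rw [Cg_triple, Pg_y hne] at h1
          by_cases hc3 : c = pick x y
          · rw [hc3]
          · simp [hc3] at h1
      · rintro rfl
        exact ⟨te_child_y hxy (pick_adj hd x y) (pick_ne hd x y) hi, inc_drop3 _,
          by rw [Cg_triple, Pg_y hne]; simp [hsy], by simp⟩
    by_cases hr1 : r = 1
    · have hsy0 : s y = 0 := by
        rcases zmod2_cases (s y) with h | h
        · exact h
        · exact absurd (h.trans hr1.symm) hsy
      rw [card2 (a0 := [x, y]) (b0 := [x, y, pick x y]) (by simp) ?_]
      · rw [hsy0]; decide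
      · intro le
        constructor
        · rintro ⟨hte, hinc, h1⟩
          by_cases hne2 : le = [x, y]
          · exact Or.inl hne2
          · exact Or.inr ((hmem le).mp ⟨hte, hinc, h1, hne2⟩)
        · rintro (rfl | rfl)
          · exact ⟨te_root hxy i, inc_root_self, by rw [Cg_pair]; exact hr1⟩
          · obtain ⟨h1, h2, h3, -⟩ := (hmem [x, y, pick x y]).mpr rfl
            exact ⟨h1, h2, h3⟩
    · have hr0 : r = 0 := (zmod_ne_one_iff r).mp hr1
      have hsy1 : s y = 1 := by
        rcases zmod2_cases (s y) with h | h
        · exact absurd (h.trans hr0.symm) hsy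
        · exact h
      rw [card1 (a0 := [x, y, pick x y]) ?_]
      · rw [hsy1]; simp
      · intro le
        constructor
        · rintro ⟨hte, hinc, h1⟩
          have hne2 : le ≠ [x, y] := by
            rintro rfl
            rw [Cg_pair, hr0] at h1; simp at h1
          exact (hmem le).mp ⟨hte, hinc, h1, hne2⟩
        · rintro rfl
          obtain ⟨h1, h2, h3, -⟩ := (hmem [x, y, pick x y]).mpr rfl
          exact ⟨h1, h2, h3⟩

lemma card_vertex_x (hd : 3 ≤ d) (hxy : (Toric d).Adj x y) {i : ℕ} (hi : 1 ≤ i)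
    (hclass : ∀ le, IsTreeEdge d x y i le → IncidentVE [y, x] le →
      le = [x, y] ∨ ∃ c, le = [y, x, c] ∧ (Toric d).Adj x c ∧ c ≠ y) :
    ((Nat.card {le // IsTreeEdge d x y i le ∧ IncidentVE [y, x] le
      ∧ Cg s x y r le = 1} : ℕ) : ZMod 2) = s x := by
  have hne : x ≠ y := hxy.ne
  by_cases hsx : s x = r
  · by_cases hr1 : r = 1
    · rw [card1 (a0 := [x, y]) ?_]
      · rw [hsx, hr1]; simp
      · intro le
        constructor
        · rintro ⟨hte, hinc, h1⟩
          rcases hclass le hte hinc with rfl | ⟨c, rfl, hc1, hc2⟩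
          · rfl
          · rw [Cg_triple, Pg_x hne] at h1
            simp [hsx] at h1
        · rintro rfl
          exact ⟨te_root hxy i, inc_root_rev, by rw [Cg_pair]; exact hr1⟩
    · have hr0 : r = 0 := (zmod_ne_one_iff r).mp hr1
      rw [card0 ?_]
      · rw [hsx, hr0]; simp
      · rintro le ⟨hte, hinc, h1⟩
        rcases hclass le hte hinc with rfl | ⟨c, rfl, hc1, hc2⟩
        · rw [Cg_pair, hr0] at h1; simp at h1
        · rw [Cg_triple, Pg_x hne] at h1
          simp [hsx] at h1
  · have hmem : ∀ le, (IsTreeEdge d x y i le ∧ IncidentVE [y, x] le ∧ Cg s x y r le = 1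
        ∧ le ≠ [x, y]) ↔ le = [y, x, pick y x] := by
      intro le
      constructor
      · rintro ⟨hte, hinc, h1, hne2⟩
        rcases hclass le hte hinc with rfl | ⟨c, rfl, hc1, hc2⟩
        · exact absurd rfl hne2
        · rw [Cg_triple, Pg_x hne] at h1
          by_cases hc3 : c = pick y x
          · rw [hc3]
          · simp [hc3] at h1
      · rintro rfl
        exact ⟨te_child_x hxy (pick_adj hd y x) (pick_ne hd y x) hi, inc_drop3 _,
          by rw [Cg_triple, Pg_x hne]; simp [hsx], by simp [hne.symm]⟩
    by_cases hr1 : r = 1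
    · have hsx0 : s x = 0 := by
        rcases zmod2_cases (s x) with h | h
        · exact h
        · exact absurd (h.trans hr1.symm) hsx
      rw [card2 (a0 := [x, y]) (b0 := [y, x, pick y x]) (by simp) ?_]
      · rw [hsx0]; decide
      · intro le
        constructor
        · rintro ⟨hte, hinc, h1⟩
          by_cases hne2 : le = [x, y]
          · exact Or.inl hne2
          · exact Or.inr ((hmem le).mp ⟨hte, hinc, h1, hne2⟩)
        · rintro (rfl | rfl)
          · exact ⟨te_root hxy i, inc_root_rev, by rw [Cg_pair]; exact hr1⟩
          · obtain ⟨h1, h2, h3, -⟩ := (hmem [y, x, pick y x]).mpr rfl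
            exact ⟨h1, h2, h3⟩
    · have hr0 : r = 0 := (zmod_ne_one_iff r).mp hr1
      have hsx1 : s x = 1 := by
        rcases zmod2_cases (s x) with h | h
        · exact absurd (h.trans hr0.symm) hsx
        · exact h
      rw [card1 (a0 := [y, x, pick y x]) ?_]
      · rw [hsx1]; simp
      · intro le
        constructor
        · rintro ⟨hte, hinc, h1⟩
          have hne2 : le ≠ [x, y] := by
            rintro rfl
            rw [Cg_pair, hr0] at h1; simp at h1
          exact (hmem le).mp ⟨hte, hinc, h1, hne2⟩
        · rintro rfl
          obtain ⟨h1, h2, h3, -⟩ := (hmem [y, x, pick y x]).mpr rfl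
          exact ⟨h1, h2, h3⟩

end CgConfig

section CgConfig2
variable {d : ℕ} {s : V d → ZMod 2} {x y : V d} {r : ZMod 2}

lemma card_vertex_yc (hd : 3 ≤ d) (hxy : (Toric d).Adj x y) {c : V d}
    (hc : (Toric d).Adj y c) (hcx : c ≠ x) :
    ((Nat.card {le // IsTreeEdge d x y 2 le ∧ IncidentVE [x, y, c] le
      ∧ Cg s x y r le = 1} : ℕ) : ZMod 2) = s c := by
  have hne : x ≠ y := hxy.ne
  set Q := Pg s x y r y c with hQ
  have hpar : Cg s x y r [x, y, c] = Q := Cg_triple x y c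
  have hdang : ∀ z, Cg s x y r [x, y, c, z] = (if z = pick y c ∧ Q ≠ s c then 1 else 0) :=
    fun z => Cg_quad x y c z
  have hteD : IsTreeEdge d x y 2 [x, y, c, pick y c] :=
    te_dang_y hxy hc hcx (pick_adj hd y c) (pick_ne hd y c)
  by_cases hQs : Q = s c
  · by_cases hQ1 : Q = 1
    · rw [card1 (a0 := [x, y, c]) ?_]
      · rw [← hQs, hQ1]; simp
      · intro le
        constructor
        · rintro ⟨hte, hinc, h1⟩
          rcases inc2_xyc hxy hte hinc with rfl | ⟨z, rfl, hz1, hz2⟩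
          · rfl
          · rw [hdang] at h1
            simp [hQs] at h1
        · rintro rfl
          exact ⟨te_child_y hxy hc hcx (by omega), inc_self3 c, by rw [hpar]; exact hQ1⟩
    · have hQ0 : Q = 0 := (zmod_ne_one_iff Q).mp hQ1
      rw [card0 ?_]
      · rw [← hQs, hQ0]; simp
      · rintro le ⟨hte, hinc, h1⟩
        rcases inc2_xyc hxy hte hinc with rfl | ⟨z, rfl, hz1, hz2⟩
        · rw [hpar, hQ0] at h1; simp at h1
        · rw [hdang] at h1
          simp [hQs] at h1
  · have hmem : ∀ le, (IsTreeEdge d x y 2 le ∧ IncidentVE [x, y, c] le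
        ∧ Cg s x y r le = 1 ∧ le ≠ [x, y, c]) ↔ le = [x, y, c, pick y c] := by
      intro le
      constructor
      · rintro ⟨hte, hinc, h1, hne2⟩
        rcases inc2_xyc hxy hte hinc with rfl | ⟨z, rfl, hz1, hz2⟩
        · exact absurd rfl hne2
        · rw [hdang] at h1
          by_cases hz3 : z = pick y c
          · rw [hz3]
          · simp [hz3] at h1
      · rintro rfl
        exact ⟨hteD, inc_drop4 _ _, by rw [hdang]; simp [hQs], by simp⟩
    by_cases hQ1 : Q = 1
    · have hsc : s c = 0 := by
        rcases zmod2_cases (s c) with h | h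
        · exact h
        · exact absurd (hQ1.trans h.symm) hQs
      rw [card2 (a0 := [x, y, c]) (b0 := [x, y, c, pick y c]) (by simp) ?_]
      · rw [hsc]; decide
      · intro le
        constructor
        · rintro ⟨hte, hinc, h1⟩
          by_cases hne2 : le = [x, y, c]
          · exact Or.inl hne2
          · exact Or.inr ((hmem le).mp ⟨hte, hinc, h1, hne2⟩)
        · rintro (rfl | rfl)
          · exact ⟨te_child_y hxy hc hcx (by omega), inc_self3 c, by rw [hpar]; exact hQ1⟩
          · obtain ⟨h1, h2, h3, -⟩ := (hmem [x, y, c, pick y c]).mpr rfl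
            exact ⟨h1, h2, h3⟩
    · have hQ0 : Q = 0 := (zmod_ne_one_iff Q).mp hQ1
      have hsc : s c = 1 := by
        rcases zmod2_cases (s c) with h | h
        · exact absurd (hQ0.trans h.symm) hQs
        · exact h
      rw [card1 (a0 := [x, y, c, pick y c]) ?_]
      · rw [hsc]; simp
      · intro le
        constructor
        · rintro ⟨hte, hinc, h1⟩
          have hne2 : le ≠ [x, y, c] := by
            rintro rfl
            rw [hpar, hQ0] at h1; simp at h1
          exact (hmem le).mp ⟨hte, hinc, h1, hne2⟩
        · rintro rfl
          obtain ⟨h1, h2, h3, -⟩ := (hmem [x, y, c, pick y c]).mpr rfl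
          exact ⟨h1, h2, h3⟩

lemma card_vertex_xc (hd : 3 ≤ d) (hxy : (Toric d).Adj x y) {c : V d}
    (hc : (Toric d).Adj x c) (hcy : c ≠ y) :
    ((Nat.card {le // IsTreeEdge d x y 2 le ∧ IncidentVE [y, x, c] le
      ∧ Cg s x y r le = 1} : ℕ) : ZMod 2) = s c := by
  have hne : x ≠ y := hxy.ne
  set Q := Pg s x y r x c with hQ
  have hpar : Cg s x y r [y, x, c] = Q := Cg_triple y x c
  have hdang : ∀ z, Cg s x y r [y, x, c, z] = (if z = pick x c ∧ Q ≠ s c then 1 else 0) :=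
    fun z => Cg_quad y x c z
  have hteD : IsTreeEdge d x y 2 [y, x, c, pick x c] :=
    te_dang_x hxy hc hcy (pick_adj hd x c) (pick_ne hd x c)
  by_cases hQs : Q = s c
  · by_cases hQ1 : Q = 1
    · rw [card1 (a0 := [y, x, c]) ?_]
      · rw [← hQs, hQ1]; simp
      · intro le
        constructor
        · rintro ⟨hte, hinc, h1⟩
          rcases inc2_yxc hxy hte hinc with rfl | ⟨z, rfl, hz1, hz2⟩
          · rfl
          · rw [hdang] at h1
            simp [hQs] at h1
        · rintro rfl
          exact ⟨te_child_x hxy hc hcy (by omega), inc_self3 c, by rw [hpar]; exact hQ1⟩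
    · have hQ0 : Q = 0 := (zmod_ne_one_iff Q).mp hQ1
      rw [card0 ?_]
      · rw [← hQs, hQ0]; simp
      · rintro le ⟨hte, hinc, h1⟩
        rcases inc2_yxc hxy hte hinc with rfl | ⟨z, rfl, hz1, hz2⟩
        · rw [hpar, hQ0] at h1; simp at h1
        · rw [hdang] at h1
          simp [hQs] at h1
  · have hmem : ∀ le, (IsTreeEdge d x y 2 le ∧ IncidentVE [y, x, c] le
        ∧ Cg s x y r le = 1 ∧ le ≠ [y, x, c]) ↔ le = [y, x, c, pick x c] := by
      intro le
      constructor
      · rintro ⟨hte, hinc, h1, hne2⟩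
        rcases inc2_yxc hxy hte hinc with rfl | ⟨z, rfl, hz1, hz2⟩
        · exact absurd rfl hne2
        · rw [hdang] at h1
          by_cases hz3 : z = pick x c
          · rw [hz3]
          · simp [hz3] at h1
      · rintro rfl
        exact ⟨hteD, inc_drop4 _ _, by rw [hdang]; simp [hQs], by simp⟩
    by_cases hQ1 : Q = 1
    · have hsc : s c = 0 := by
        rcases zmod2_cases (s c) with h | h
        · exact h
        · exact absurd (hQ1.trans h.symm) hQs
      rw [card2 (a0 := [y, x, c]) (b0 := [y, x, c, pick x c]) (by simp) ?_]
      · rw [hsc]; decide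
      · intro le
        constructor
        · rintro ⟨hte, hinc, h1⟩
          by_cases hne2 : le = [y, x, c]
          · exact Or.inl hne2
          · exact Or.inr ((hmem le).mp ⟨hte, hinc, h1, hne2⟩)
        · rintro (rfl | rfl)
          · exact ⟨te_child_x hxy hc hcy (by omega), inc_self3 c, by rw [hpar]; exact hQ1⟩
          · obtain ⟨h1, h2, h3, -⟩ := (hmem [y, x, c, pick x c]).mpr rfl
            exact ⟨h1, h2, h3⟩
    · have hQ0 : Q = 0 := (zmod_ne_one_iff Q).mp hQ1
      have hsc : s c = 1 := by
        rcases zmod2_cases (s c) with h | h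
        · exact absurd (hQ0.trans h.symm) hQs
        · exact h
      rw [card1 (a0 := [y, x, c, pick x c]) ?_]
      · rw [hsc]; simp
      · intro le
        constructor
        · rintro ⟨hte, hinc, h1⟩
          have hne2 : le ≠ [y, x, c] := by
            rintro rfl
            rw [hpar, hQ0] at h1; simp at h1
          exact (hmem le).mp ⟨hte, hinc, h1, hne2⟩
        · rintro rfl
          obtain ⟨h1, h2, h3, -⟩ := (hmem [y, x, c, pick x c]).mpr rfl
          exact ⟨h1, h2, h3⟩

lemma isConfig_Cg1 (hd : 3 ≤ d) (hxy : (Toric d).Adj x y) :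
    IsConfig d x y 1 s (Cg s x y r) := by
  intro lv hlv
  rcases (tv1_iff hxy).mp hlv with rfl | rfl
  · rw [vcheck_pair]
    exact card_vertex_y hd hxy le_rfl (fun le a b => inc1_xy hxy a b)
  · rw [vcheck_pair]
    exact card_vertex_x hd hxy le_rfl (fun le a b => inc1_yx hxy a b)

lemma isConfig_Cg2 (hd : 3 ≤ d) (hxy : (Toric d).Adj x y) :
    IsConfig d x y 2 s (Cg s x y r) := by
  intro lv hlv
  rcases (tv2_iff hxy).mp hlv with rfl | rfl | ⟨c, rfl, hc1, hc2⟩ | ⟨c, rfl, hc1, hc2⟩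
  · rw [vcheck_pair]
    exact card_vertex_y hd hxy (by omega) (fun le a b => inc2_xy hxy a b)
  · rw [vcheck_pair]
    exact card_vertex_x hd hxy (by omega) (fun le a b => inc2_yx hxy a b)
  · rw [vcheck_triple]
    exact card_vertex_yc hd hxy hc1 hc2
  · rw [vcheck_triple]
    exact card_vertex_xc hd hxy hc1 hc2

end CgConfig2

/-! ### minW facts -/

section MinW
variable {d : ℕ} {s : V d → ZMod 2} {x y : V d}

lemma minW_set_nonempty (hd : 3 ≤ d) (hxy : (Toric d).Adj x y) (s : V d → ZMod 2)
    (r : ZMod 2) {i : ℕ} (hi : i = 1 ∨ i = 2) :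
    {n : ℕ | ∃ C : List (V d) → ZMod 2,
      IsConfig d x y i s C ∧ C [x, y] = r ∧ cweight d x y i C = n}.Nonempty := by
  refine ⟨cweight d x y i (Cg s x y r), Cg s x y r, ?_, Cg_pair x y, rfl⟩
  rcases hi with rfl | rfl
  · exact isConfig_Cg1 hd hxy
  · exact isConfig_Cg2 hd hxy

lemma minW_mem (hd : 3 ≤ d) (hxy : (Toric d).Adj x y) (s : V d → ZMod 2)
    (r : ZMod 2) {i : ℕ} (hi : i = 1 ∨ i = 2) :
    ∃ C : List (V d) → ZMod 2, IsConfig d x y i s C ∧ C [x, y] = r ∧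
      cweight d x y i C = minW d x y i s r :=
  Nat.sInf_mem (minW_set_nonempty hd hxy s r hi)

lemma cweight_ge_one (hd : 3 ≤ d) {i : ℕ} {C : List (V d) → ZMod 2}
    (hxy : (Toric d).Adj x y) (hroot : C [x, y] = 1) : 1 ≤ cweight d x y i C := by
  unfold cweight
  exact one_le_card (Set.Finite.subset (finite_te hd x y i) (fun l h => h.1))
    ⟨te_root hxy i, hroot⟩

/-- In the (a)-case the root-only configuration is optimal: `minW .. 1 = 1`. -/
lemma minW_one_eq_one (hd : 3 ≤ d) (hxy : (Toric d).Adj x y)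
    (hsy : s y = 1) (hsx : s x = 1) (hs0 : ∀ c, c ≠ x → c ≠ y → s c = 0)
    {i : ℕ} (hi : i = 1 ∨ i = 2) : minW d x y i s 1 = 1 := by
  have hne : x ≠ y := hxy.ne
  have hcw : cweight d x y i (Cg s x y 1) = 1 := by
    unfold cweight
    apply card1 (a0 := [x, y])
    intro le
    constructor
    · rintro ⟨hte, h1⟩
      have hshapes : le = [x, y] ∨
          (∃ c, le = [x, y, c] ∧ (Toric d).Adj y c ∧ c ≠ x) ∨
          (∃ c, le = [y, x, c] ∧ (Toric d).Adj x c ∧ c ≠ y) ∨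
          (∃ c z, le = [x, y, c, z] ∧ (Toric d).Adj y c ∧ c ≠ x ∧ (Toric d).Adj c z ∧ z ≠ y) ∨
          (∃ c z, le = [y, x, c, z] ∧ (Toric d).Adj x c ∧ c ≠ y ∧ (Toric d).Adj c z ∧ z ≠ x) := by
        rcases hi with rfl | rfl
        · rcases (te1_iff hxy).mp hte with h | h | h
          · exact Or.inl h
          · exact Or.inr (Or.inl h)
          · exact Or.inr (Or.inr (Or.inl h))
        · exact (te2_iff hxy).mp hte
      have hPgy : ∀ c, (Toric d).Adj y c → Pg s x y 1 y c = 0 := by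
        intro c hc
        rw [Pg_y hne]
        simp [hsy]
      have hPgx : ∀ c, (Toric d).Adj x c → Pg s x y 1 x c = 0 := by
        intro c hc
        rw [Pg_x hne]
        simp [hsx]
      rcases hshapes with rfl | ⟨c, rfl, hc1, hc2⟩ | ⟨c, rfl, hc1, hc2⟩ |
        ⟨c, z, rfl, hc1, hc2, hz1, hz2⟩ | ⟨c, z, rfl, hc1, hc2, hz1, hz2⟩
      · rfl
      · rw [Cg_triple, hPgy c hc1] at h1; simp at h1
      · rw [Cg_triple, hPgx c hc1] at h1; simp at h1
      · rw [Cg_quad, hPgy c hc1, hs0 c hc2 (Ne.symm hc1.ne)] at h1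
        simp at h1
      · rw [Cg_quad, hPgx c hc1, hs0 c (Ne.symm hc1.ne) hc2] at h1
        simp at h1
    · rintro rfl
      exact ⟨te_root hxy i, Cg_pair x y⟩
  apply le_antisymm
  · apply Nat.sInf_le
    refine ⟨Cg s x y 1, ?_, Cg_pair x y, hcw⟩
    rcases hi with rfl | rfl
    · exact isConfig_Cg1 hd hxy
    · exact isConfig_Cg2 hd hxy
  · obtain ⟨C, hC, hroot, hcw'⟩ := minW_mem hd hxy s 1 hi
    rw [← hcw']
    exact cweight_ge_one hd hxy hroot

/-- In the (a)-case any root-unlabeled configuration has weight at least 2. -/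
lemma minW_zero_ge_two (hd : 3 ≤ d) (hxy : (Toric d).Adj x y)
    (hsy : s y = 1) (hsx : s x = 1) {i : ℕ} (hi : i = 1 ∨ i = 2) :
    2 ≤ minW d x y i s 0 := by
  have hne : x ≠ y := hxy.ne
  obtain ⟨C, hC, hroot, hcw⟩ := minW_mem hd hxy s 0 hi
  rw [← hcw]
  have htvxy : IsTreeVertex d x y i [x, y] := by
    rcases hi with rfl | rfl
    · exact (tv1_iff hxy).mpr (Or.inl rfl)
    · exact (tv2_iff hxy).mpr (Or.inl rfl)
  have htvyx : IsTreeVertex d x y i [y, x] := by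
    rcases hi with rfl | rfl
    · exact (tv1_iff hxy).mpr (Or.inr rfl)
    · exact (tv2_iff hxy).mpr (Or.inr (Or.inl rfl))
  have h1 := hC [x, y] htvxy
  rw [vcheck_pair, hsy] at h1
  have h2 := hC [y, x] htvyx
  rw [vcheck_pair, hsx] at h2
  obtain ⟨le1, hte1, hinc1, hl1⟩ := exists_of_card_odd h1
  obtain ⟨le2, hte2, hinc2, hl2⟩ := exists_of_card_odd h2
  have hc1 : ∃ c, le1 = [x, y, c] := by
    have : le1 = [x, y] ∨ ∃ c, le1 = [x, y, c] ∧ (Toric d).Adj y c ∧ c ≠ x := by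
      rcases hi with rfl | rfl
      · exact inc1_xy hxy hte1 hinc1
      · exact inc2_xy hxy hte1 hinc1
    rcases this with rfl | ⟨c, rfl, -⟩
    · rw [hroot] at hl1; simp at hl1
    · exact ⟨c, rfl⟩
  have hc2 : ∃ c, le2 = [y, x, c] := by
    have : le2 = [x, y] ∨ ∃ c, le2 = [y, x, c] ∧ (Toric d).Adj x c ∧ c ≠ y := by
      rcases hi with rfl | rfl
      · exact inc1_yx hxy hte2 hinc2
      · exact inc2_yx hxy hte2 hinc2
    rcases this with rfl | ⟨c, rfl, -⟩
    · rw [hroot] at hl2; simp at hl2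
    · exact ⟨c, rfl⟩
  obtain ⟨c1, rfl⟩ := hc1
  obtain ⟨c2, rfl⟩ := hc2
  unfold cweight
  exact two_le_card (Set.Finite.subset (finite_te hd x y i) (fun l h => h.1))
    ⟨hte1, hl1⟩ ⟨hte2, hl2⟩ (by simp [hne])

/-- The (a)-case conclusion: negative a posteriori value. -/
lemma APPo_neg (hd : 3 ≤ d) (hxy : (Toric d).Adj x y)
    (hsy : s y = 1) (hsx : s x = 1) (hs0 : ∀ c, c ≠ x → c ≠ y → s c = 0)
    {i : ℕ} (hi : i = 1 ∨ i = 2) : APPo d s i x y < 0 := by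
  have h1 := minW_one_eq_one hd hxy hsy hsx hs0 hi
  have h2 := minW_zero_ge_two hd hxy hsy hsx hi
  unfold APPo
  rw [h1]
  have : (2 : ℤ) ≤ (minW d x y i s 0 : ℤ) := by exact_mod_cast h2
  omega

end MinW

/-! ### The toggle argument: non-error edges have non-negative APP -/

section Toggle
variable {d : ℕ} {s : V d → ZMod 2} {x y : V d}

lemma ind_toggle (a b : ZMod 2) (h : a = 1 ∨ b = 1) :
    (if a + 1 = 1 then (1 : ℕ) else 0) + (if b + 1 = 1 then 1 else 0)
      ≤ 1 + ((if a = 1 then 1 else 0) + (if b = 1 then 1 else 0)) := by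
  revert a b; decide

lemma ind_toggle2 (a b : ZMod 2) (h : a = 1 ∨ b = 1) :
    (if a + 1 = 1 then (1 : ℕ) else 0) + (if b + 1 = 1 then 1 else 0)
      ≤ (if a = 1 then 1 else 0) + (if b = 1 then 1 else 0) := by
  revert a b; decide

lemma side_pick1_y (hd : 3 ≤ d) (hxy : (Toric d).Adj x y) {C1 : List (V d) → ZMod 2}
    (hC1 : IsConfig d x y 1 s C1) (hroot : C1 [x, y] = 1) :
    ∃ c, (Toric d).Adj y c ∧ c ≠ x ∧ (s y = 1 ∨ C1 [x, y, c] = 1) := by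
  by_cases hsy : s y = 1
  · exact ⟨pick x y, pick_adj hd x y, pick_ne hd x y, Or.inl hsy⟩
  · have hsy0 : s y = 0 := (zmod_ne_one_iff _).mp hsy
    by_contra hno
    push_neg at hno
    have h1 := hC1 [x, y] ((tv1_iff hxy).mpr (Or.inl rfl))
    rw [vcheck_pair, hsy0] at h1
    rw [card1 (a0 := [x, y]) ?_] at h1
    · simp at h1
    · intro le
      constructor
      · rintro ⟨hte, hinc, hl⟩
        rcases inc1_xy hxy hte hinc with rfl | ⟨c, rfl, hc1, hc2⟩
        · rfl
        · exact absurd hl ((hno c hc1 hc2).2)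
      · rintro rfl
        exact ⟨te_root hxy 1, inc_root_self, hroot⟩

lemma side_pick1_x (hd : 3 ≤ d) (hxy : (Toric d).Adj x y) {C1 : List (V d) → ZMod 2}
    (hC1 : IsConfig d x y 1 s C1) (hroot : C1 [x, y] = 1) :
    ∃ c, (Toric d).Adj x c ∧ c ≠ y ∧ (s x = 1 ∨ C1 [y, x, c] = 1) := by
  by_cases hsx : s x = 1
  · exact ⟨pick y x, pick_adj hd y x, pick_ne hd y x, Or.inl hsx⟩
  · have hsx0 : s x = 0 := (zmod_ne_one_iff _).mp hsx
    by_contra hno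
    push_neg at hno
    have h1 := hC1 [y, x] ((tv1_iff hxy).mpr (Or.inr rfl))
    rw [vcheck_pair, hsx0] at h1
    rw [card1 (a0 := [x, y]) ?_] at h1
    · simp at h1
    · intro le
      constructor
      · rintro ⟨hte, hinc, hl⟩
        rcases inc1_yx hxy hte hinc with rfl | ⟨c, rfl, hc1, hc2⟩
        · rfl
        · exact absurd hl ((hno c hc1 hc2).2)
      · rintro rfl
        exact ⟨te_root hxy 1, inc_root_rev, hroot⟩

open scoped Classical in
set_option maxHeartbeats 1600000 in
lemma APPo_nonneg_1 (hd : 3 ≤ d) (hxy : (Toric d).Adj x y)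
    (hnb : ¬(s x = 1 ∧ s y = 1)) : 0 ≤ APPo d s 1 x y := by
  have hne : x ≠ y := hxy.ne
  obtain ⟨C1, hC1, hroot, hcw⟩ := minW_mem hd hxy s 1 (Or.inl rfl)
  obtain ⟨cy, hcy1, hcy2, hcyl⟩ := side_pick1_y hd hxy hC1 hroot
  obtain ⟨cx, hcx1, hcx2, hcxl⟩ := side_pick1_x hd hxy hC1 hroot
  have hor : C1 [x, y, cy] = 1 ∨ C1 [y, x, cx] = 1 := by
    rcases hcyl with h | h
    · rcases hcxl with h' | h'
      · exact absurd ⟨h', h⟩ hnb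
      · exact Or.inr h'
    · exact Or.inl h
  set χ : List (V d) → ZMod 2 := fun le =>
    (if le = [x, y] then 1 else 0) + (if le = [x, y, cy] then 1 else 0) +
      (if le = [y, x, cx] then 1 else 0) with hχ
  set C0 : List (V d) → ZMod 2 := fun le => C1 le + χ le with hC0
  have hχ1 : χ [x, y] = 1 := by simp [hχ, hne]
  have hχ2 : χ [x, y, cy] = 1 := by simp [hχ, hne]
  have hχ3 : χ [y, x, cx] = 1 := by simp [hχ, hne.symm]
  have hte2 : IsTreeEdge d x y 1 [x, y, cy] := te_child_y hxy hcy1 hcy2 le_rfl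
  have hte3 : IsTreeEdge d x y 1 [y, x, cx] := te_child_x hxy hcx1 hcx2 le_rfl
  -- C0 is a configuration
  have hcfg0 : IsConfig d x y 1 s C0 := by
    rw [isConfig_iff hd]
    have hC1' := (isConfig_iff hd s C1).mp hC1
    intro lv hlv
    have hsplit : ∀ F : Finset (List (V d)), ∑ le ∈ F, C0 le =
        (∑ le ∈ F, C1 le) + ((if [x, y] ∈ F then (1 : ZMod 2) else 0) +
          (if [x, y, cy] ∈ F then 1 else 0) + (if [y, x, cx] ∈ F then 1 else 0)) := by
      intro F
      show ∑ le ∈ F, (C1 le + ((if le = [x, y] then (1 : ZMod 2) else 0) +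
        (if le = [x, y, cy] then 1 else 0) + (if le = [y, x, cx] then 1 else 0))) = _
      rw [Finset.sum_add_distrib, Finset.sum_add_distrib, Finset.sum_add_distrib,
        Finset.sum_ite_eq' F ([x, y] : List (V d)) (fun _ => (1 : ZMod 2)),
        Finset.sum_ite_eq' F ([x, y, cy] : List (V d)) (fun _ => (1 : ZMod 2)),
        Finset.sum_ite_eq' F ([y, x, cx] : List (V d)) (fun _ => (1 : ZMod 2))]
    rcases (tv1_iff hxy).mp hlv with rfl | rfl
    · rw [hsplit, hC1' [x, y] hlv]
      have m1 : [x, y] ∈ (TEF hd x y 1).filter (fun le => IncidentVE [x, y] le) :=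
        Finset.mem_filter.mpr ⟨mem_TEF.mpr (te_root hxy 1), inc_root_self⟩
      have m2 : [x, y, cy] ∈ (TEF hd x y 1).filter (fun le => IncidentVE [x, y] le) :=
        Finset.mem_filter.mpr ⟨mem_TEF.mpr hte2, inc_drop3 cy⟩
      have m3 : [y, x, cx] ∉ (TEF hd x y 1).filter (fun le => IncidentVE [x, y] le) := by
        intro hm
        have hI := (Finset.mem_filter.mp hm).2
        rcases hI with h | h | ⟨h1, h2⟩
        · exact absurd h (by simp)
        · simp [List.dropLast] at h
          exact hne h.1
        · simp at h1
      rw [if_pos m1, if_pos m2, if_neg m3]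
      have h110 : (1 : ZMod 2) + 1 + 0 = 0 := by decide
      rw [h110, add_zero]
    · rw [hsplit, hC1' [y, x] hlv]
      have m1 : [x, y] ∈ (TEF hd x y 1).filter (fun le => IncidentVE [y, x] le) :=
        Finset.mem_filter.mpr ⟨mem_TEF.mpr (te_root hxy 1), inc_root_rev⟩
      have m2 : [x, y, cy] ∉ (TEF hd x y 1).filter (fun le => IncidentVE [y, x] le) := by
        intro hm
        have hI := (Finset.mem_filter.mp hm).2
        rcases hI with h | h | ⟨h1, h2⟩
        · exact absurd h (by simp)
        · simp [List.dropLast] at h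
          exact hne h.2
        · simp at h1
      have m3 : [y, x, cx] ∈ (TEF hd x y 1).filter (fun le => IncidentVE [y, x] le) :=
        Finset.mem_filter.mpr ⟨mem_TEF.mpr hte3, inc_drop3 cx⟩
      rw [if_pos m1, if_neg m2, if_pos m3]
      have h110 : (1 : ZMod 2) + 0 + 1 = 0 := by decide
      rw [h110, add_zero]
  -- C0 has root label 0
  have hroot0 : C0 [x, y] = 0 := by
    show C1 [x, y] + χ [x, y] = 0
    rw [hχ1, hroot]
    decide
  -- C0 is not heavier than C1
  have hwle : cweight d x y 1 C0 ≤ cweight d x y 1 C1 := by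
    rw [cweight_eq hd x y 1, cweight_eq hd x y 1, Finset.card_filter, Finset.card_filter]
    set T : Finset (List (V d)) := {[x, y], [x, y, cy], [y, x, cx]} with hT
    rw [← Finset.sum_filter_add_sum_filter_not (TEF hd x y 1) (· ∈ T)]
    rw [← Finset.sum_filter_add_sum_filter_not (TEF hd x y 1) (· ∈ T)
      (fun le => if C1 le = 1 then 1 else 0)]
    have heq2 : ∑ le ∈ (TEF hd x y 1).filter (fun le => ¬ le ∈ T),
        (if C0 le = 1 then (1 : ℕ) else 0) =
        ∑ le ∈ (TEF hd x y 1).filter (fun le => ¬ le ∈ T),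
        (if C1 le = 1 then (1 : ℕ) else 0) := by
      apply Finset.sum_congr rfl
      intro le hle
      have hnm := (Finset.mem_filter.mp hle).2
      simp only [hT, Finset.mem_insert, Finset.mem_singleton] at hnm
      push_neg at hnm
      have hee : C0 le = C1 le := by
        show C1 le + ((if le = [x, y] then (1 : ZMod 2) else 0) +
          (if le = [x, y, cy] then 1 else 0) + (if le = [y, x, cx] then 1 else 0)) = C1 le
        rw [if_neg hnm.1, if_neg hnm.2.1, if_neg hnm.2.2]
        ring
      rw [hee]
    have heqT : (TEF hd x y 1).filter (fun le => le ∈ T) = T := by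
      apply Finset.ext
      intro a
      simp only [Finset.mem_filter, hT, Finset.mem_insert, Finset.mem_singleton]
      constructor
      · exact fun h => h.2
      · rintro (rfl | rfl | rfl)
        · exact ⟨mem_TEF.mpr (te_root hxy 1), Or.inl rfl⟩
        · exact ⟨mem_TEF.mpr hte2, Or.inr (Or.inl rfl)⟩
        · exact ⟨mem_TEF.mpr hte3, Or.inr (Or.inr rfl)⟩
    rw [heq2, heqT]
    have hd1 : ([x, y] : List (V d)) ∉ ({[x, y, cy], [y, x, cx]} : Finset (List (V d))) := by
      simp
    have hd2 : ([x, y, cy] : List (V d)) ∉ ({[y, x, cx]} : Finset (List (V d))) := by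
      simp [hne]
    rw [hT, Finset.sum_insert hd1, Finset.sum_insert hd2, Finset.sum_singleton,
      Finset.sum_insert hd1, Finset.sum_insert hd2, Finset.sum_singleton]
    have e1 : C0 [x, y] = 0 := hroot0
    have e2 : C0 [x, y, cy] = C1 [x, y, cy] + 1 := by
      show C1 [x, y, cy] + χ [x, y, cy] = _
      rw [hχ2]
    have e3 : C0 [y, x, cx] = C1 [y, x, cx] + 1 := by
      show C1 [y, x, cx] + χ [y, x, cx] = _
      rw [hχ3]
    rw [e1, e2, e3, hroot]
    have := ind_toggle (C1 [x, y, cy]) (C1 [y, x, cx]) hor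
    have hz : (if (0 : ZMod 2) = 1 then (1 : ℕ) else 0) = 0 := by decide
    have ho : (if (1 : ZMod 2) = 1 then (1 : ℕ) else 0) = 1 := by decide
    rw [hz, ho]
    omega
  -- conclude
  have hmem0 : cweight d x y 1 C0 ∈ {n : ℕ | ∃ C : List (V d) → ZMod 2,
      IsConfig d x y 1 s C ∧ C [x, y] = 0 ∧ cweight d x y 1 C = n} :=
    ⟨C0, hcfg0, hroot0, rfl⟩
  have h0le : minW d x y 1 s 0 ≤ cweight d x y 1 C0 := Nat.sInf_le hmem0
  unfold APPo
  have : minW d x y 1 s 0 ≤ minW d x y 1 s 1 := by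
    calc minW d x y 1 s 0 ≤ cweight d x y 1 C0 := h0le
    _ ≤ cweight d x y 1 C1 := hwle
    _ = minW d x y 1 s 1 := hcw
  omega

end Toggle

section IncIff
variable {d : ℕ}

lemma inc_22_iff {u v w w' : V d} :
    IncidentVE [u, v] [w, w'] ↔ (u = w ∧ v = w') ∨ (u = w' ∧ v = w) := by
  unfold IncidentVE
  constructor
  · rintro (h | h | ⟨h1, h2⟩)
    · simp at h; tauto
    · simp [List.dropLast] at h
    · simp at h2; tauto
  · rintro (⟨rfl, rfl⟩ | ⟨rfl, rfl⟩)
    · exact Or.inl rfl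
    · exact Or.inr (Or.inr ⟨rfl, by simp⟩)

lemma inc_23_iff {u v w w' c : V d} :
    IncidentVE [u, v] [w, w', c] ↔ u = w ∧ v = w' := by
  unfold IncidentVE
  constructor
  · rintro (h | h | ⟨h1, h2⟩)
    · simp at h
    · simp [List.dropLast] at h; tauto
    · simp at h1
  · rintro ⟨rfl, rfl⟩
    exact Or.inr (Or.inl (by simp [List.dropLast]))

lemma inc_33_iff {u v c w w' c' : V d} :
    IncidentVE [u, v, c] [w, w', c'] ↔ u = w ∧ v = w' ∧ c = c' := by
  unfold IncidentVE
  constructor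
  · rintro (h | h | ⟨h1, h2⟩)
    · simp at h; tauto
    · simp [List.dropLast] at h
    · simp at h1
  · rintro ⟨rfl, rfl, rfl⟩
    exact Or.inl rfl

lemma inc_34_iff {u v c w w' c' z : V d} :
    IncidentVE [u, v, c] [w, w', c', z] ↔ u = w ∧ v = w' ∧ c = c' := by
  unfold IncidentVE
  constructor
  · rintro (h | h | ⟨h1, h2⟩)
    · simp at h
    · simp [List.dropLast] at h; tauto
    · simp at h1
  · rintro ⟨rfl, rfl, rfl⟩
    exact Or.inr (Or.inl (by simp [List.dropLast]))

lemma not_inc_24 {u v w w' c z : V d} : ¬ IncidentVE [u, v] [w, w', c, z] := by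
  rintro (h | h | ⟨h1, h2⟩)
  · simp at h
  · simp [List.dropLast] at h
  · simp at h1

end IncIff

section Toggle2
variable {d : ℕ} {s : V d → ZMod 2} {x y : V d}

lemma side_pick2_y (hd : 3 ≤ d) (hxy : (Toric d).Adj x y) {C1 : List (V d) → ZMod 2}
    (hC1 : IsConfig d x y 2 s C1) (hroot : C1 [x, y] = 1)
    (hpy : s y = 1 → ∃ p, (Toric d).Adj y p ∧ p ≠ x ∧ s p = 1) :
    ∃ c z, (Toric d).Adj y c ∧ c ≠ x ∧ (Toric d).Adj c z ∧ z ≠ y ∧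
      (C1 [x, y, c] = 1 ∨ C1 [x, y, c, z] = 1) := by
  by_cases hsy : s y = 1
  · obtain ⟨p, hp1, hp2, hp3⟩ := hpy hsy
    by_cases hl : C1 [x, y, p] = 1
    · exact ⟨p, pick y p, hp1, hp2, pick_adj hd y p, pick_ne hd y p, Or.inl hl⟩
    · have htv : IsTreeVertex d x y 2 [x, y, p] :=
        (tv2_iff hxy).mpr (Or.inr (Or.inr (Or.inl ⟨p, rfl, hp1, hp2⟩)))
      have h1 := hC1 [x, y, p] htv
      rw [vcheck_triple, hp3] at h1
      obtain ⟨le, hte, hinc, hl1⟩ := exists_of_card_odd h1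
      rcases inc2_xyc hxy hte hinc with rfl | ⟨z, rfl, hz1, hz2⟩
      · exact absurd hl1 hl
      · exact ⟨p, z, hp1, hp2, hz1, hz2, Or.inr hl1⟩
  · have hsy0 : s y = 0 := (zmod_ne_one_iff _).mp hsy
    have hex : ∃ c, ((Toric d).Adj y c ∧ c ≠ x) ∧ C1 [x, y, c] = 1 := by
      by_contra hno
      push_neg at hno
      have h1 := hC1 [x, y] ((tv2_iff hxy).mpr (Or.inl rfl))
      rw [vcheck_pair, hsy0] at h1
      rw [card1 (a0 := [x, y]) ?_] at h1
      · simp at h1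
      · intro le
        constructor
        · rintro ⟨hte, hinc, hl⟩
          rcases inc2_xy hxy hte hinc with rfl | ⟨c, rfl, hc1, hc2⟩
          · rfl
          · exact absurd hl (hno c ⟨hc1, hc2⟩)
        · rintro rfl
          exact ⟨te_root hxy 2, inc_root_self, hroot⟩
    obtain ⟨c, ⟨hc1, hc2⟩, hl⟩ := hex
    exact ⟨c, pick y c, hc1, hc2, pick_adj hd y c, pick_ne hd y c, Or.inl hl⟩

lemma side_pick2_x (hd : 3 ≤ d) (hxy : (Toric d).Adj x y) {C1 : List (V d) → ZMod 2}
    (hC1 : IsConfig d x y 2 s C1) (hroot : C1 [x, y] = 1)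
    (hpx : s x = 1 → ∃ p, (Toric d).Adj x p ∧ p ≠ y ∧ s p = 1) :
    ∃ c z, (Toric d).Adj x c ∧ c ≠ y ∧ (Toric d).Adj c z ∧ z ≠ x ∧
      (C1 [y, x, c] = 1 ∨ C1 [y, x, c, z] = 1) := by
  by_cases hsx : s x = 1
  · obtain ⟨p, hp1, hp2, hp3⟩ := hpx hsx
    by_cases hl : C1 [y, x, p] = 1
    · exact ⟨p, pick x p, hp1, hp2, pick_adj hd x p, pick_ne hd x p, Or.inl hl⟩
    · have htv : IsTreeVertex d x y 2 [y, x, p] :=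
        (tv2_iff hxy).mpr (Or.inr (Or.inr (Or.inr ⟨p, rfl, hp1, hp2⟩)))
      have h1 := hC1 [y, x, p] htv
      rw [vcheck_triple, hp3] at h1
      obtain ⟨le, hte, hinc, hl1⟩ := exists_of_card_odd h1
      rcases inc2_yxc hxy hte hinc with rfl | ⟨z, rfl, hz1, hz2⟩
      · exact absurd hl1 hl
      · exact ⟨p, z, hp1, hp2, hz1, hz2, Or.inr hl1⟩
  · have hsx0 : s x = 0 := (zmod_ne_one_iff _).mp hsx
    have hex : ∃ c, ((Toric d).Adj x c ∧ c ≠ y) ∧ C1 [y, x, c] = 1 := by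
      by_contra hno
      push_neg at hno
      have h1 := hC1 [y, x] ((tv2_iff hxy).mpr (Or.inr (Or.inl rfl)))
      rw [vcheck_pair, hsx0] at h1
      rw [card1 (a0 := [x, y]) ?_] at h1
      · simp at h1
      · intro le
        constructor
        · rintro ⟨hte, hinc, hl⟩
          rcases inc2_yx hxy hte hinc with rfl | ⟨c, rfl, hc1, hc2⟩
          · rfl
          · exact absurd hl (hno c ⟨hc1, hc2⟩)
        · rintro rfl
          exact ⟨te_root hxy 2, inc_root_rev, hroot⟩
    obtain ⟨c, ⟨hc1, hc2⟩, hl⟩ := hex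
    exact ⟨c, pick x c, hc1, hc2, pick_adj hd x c, pick_ne hd x c, Or.inl hl⟩

open scoped Classical in
set_option maxHeartbeats 3200000 in
lemma APPo_nonneg_2 (hd : 3 ≤ d) (hxy : (Toric d).Adj x y)
    (hnb : ¬(s x = 1 ∧ s y = 1))
    (hpy : s y = 1 → ∃ p, (Toric d).Adj y p ∧ p ≠ x ∧ s p = 1)
    (hpx : s x = 1 → ∃ p, (Toric d).Adj x p ∧ p ≠ y ∧ s p = 1) :
    0 ≤ APPo d s 2 x y := by
  have hne : x ≠ y := hxy.ne
  obtain ⟨C1, hC1, hroot, hcw⟩ := minW_mem hd hxy s 1 (Or.inr rfl)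
  obtain ⟨cy, zy, hcy1, hcy2, hzy1, hzy2, hory⟩ := side_pick2_y hd hxy hC1 hroot hpy
  obtain ⟨cx, zx, hcx1, hcx2, hzx1, hzx2, horx⟩ := side_pick2_x hd hxy hC1 hroot hpx
  set χ : List (V d) → ZMod 2 := fun le =>
    (if le = [x, y] then 1 else 0) + (if le = [x, y, cy] then 1 else 0) +
      (if le = [x, y, cy, zy] then 1 else 0) + (if le = [y, x, cx] then 1 else 0) +
      (if le = [y, x, cx, zx] then 1 else 0) with hχ
  set C0 : List (V d) → ZMod 2 := fun le => C1 le + χ le with hC0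
  have hχ1 : χ [x, y] = 1 := by simp [hχ, hne]
  have hχ2 : χ [x, y, cy] = 1 := by simp [hχ, hne]
  have hχ3 : χ [x, y, cy, zy] = 1 := by simp [hχ, hne]
  have hχ4 : χ [y, x, cx] = 1 := by simp [hχ, hne.symm]
  have hχ5 : χ [y, x, cx, zx] = 1 := by simp [hχ, hne.symm]
  have hte2 : IsTreeEdge d x y 2 [x, y, cy] := te_child_y hxy hcy1 hcy2 (by omega)
  have hte3 : IsTreeEdge d x y 2 [x, y, cy, zy] := te_dang_y hxy hcy1 hcy2 hzy1 hzy2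
  have hte4 : IsTreeEdge d x y 2 [y, x, cx] := te_child_x hxy hcx1 hcx2 (by omega)
  have hte5 : IsTreeEdge d x y 2 [y, x, cx, zx] := te_dang_x hxy hcx1 hcx2 hzx1 hzx2
  -- C0 is a configuration
  have hcfg0 : IsConfig d x y 2 s C0 := by
    rw [isConfig_iff hd]
    have hC1' := (isConfig_iff hd s C1).mp hC1
    intro lv hlv
    have hsplit : ∀ F : Finset (List (V d)), ∑ le ∈ F, C0 le =
        (∑ le ∈ F, C1 le) + ((if [x, y] ∈ F then (1 : ZMod 2) else 0) +
          (if [x, y, cy] ∈ F then 1 else 0) + (if [x, y, cy, zy] ∈ F then 1 else 0) +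
          (if [y, x, cx] ∈ F then 1 else 0) + (if [y, x, cx, zx] ∈ F then 1 else 0)) := by
      intro F
      show ∑ le ∈ F, (C1 le + ((if le = [x, y] then (1 : ZMod 2) else 0) +
        (if le = [x, y, cy] then 1 else 0) + (if le = [x, y, cy, zy] then 1 else 0) +
        (if le = [y, x, cx] then 1 else 0) + (if le = [y, x, cx, zx] then 1 else 0))) = _
      rw [Finset.sum_add_distrib, Finset.sum_add_distrib, Finset.sum_add_distrib,
        Finset.sum_add_distrib, Finset.sum_add_distrib,
        Finset.sum_ite_eq' F ([x, y] : List (V d)) (fun _ => (1 : ZMod 2)),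
        Finset.sum_ite_eq' F ([x, y, cy] : List (V d)) (fun _ => (1 : ZMod 2)),
        Finset.sum_ite_eq' F ([x, y, cy, zy] : List (V d)) (fun _ => (1 : ZMod 2)),
        Finset.sum_ite_eq' F ([y, x, cx] : List (V d)) (fun _ => (1 : ZMod 2)),
        Finset.sum_ite_eq' F ([y, x, cx, zx] : List (V d)) (fun _ => (1 : ZMod 2))]
    rcases (tv2_iff hxy).mp hlv with rfl | rfl | ⟨c, rfl, hc1, hc2⟩ | ⟨c, rfl, hc1, hc2⟩
    · rw [hsplit, hC1' [x, y] hlv]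
      have m1 : [x, y] ∈ (TEF hd x y 2).filter (fun le => IncidentVE [x, y] le) :=
        Finset.mem_filter.mpr ⟨mem_TEF.mpr (te_root hxy 2), inc_root_self⟩
      have m2 : [x, y, cy] ∈ (TEF hd x y 2).filter (fun le => IncidentVE [x, y] le) :=
        Finset.mem_filter.mpr ⟨mem_TEF.mpr hte2, inc_drop3 cy⟩
      have m3 : [x, y, cy, zy] ∉ (TEF hd x y 2).filter (fun le => IncidentVE [x, y] le) :=
        fun hm => not_inc_24 (Finset.mem_filter.mp hm).2
      have m4 : [y, x, cx] ∉ (TEF hd x y 2).filter (fun le => IncidentVE [x, y] le) := by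
        intro hm
        have hI := (Finset.mem_filter.mp hm).2
        rw [inc_23_iff] at hI
        exact hne hI.1
      have m5 : [y, x, cx, zx] ∉ (TEF hd x y 2).filter (fun le => IncidentVE [x, y] le) :=
        fun hm => not_inc_24 (Finset.mem_filter.mp hm).2
      rw [if_pos m1, if_pos m2, if_neg m3, if_neg m4, if_neg m5]
      have : (1 : ZMod 2) + 1 + 0 + 0 + 0 = 0 := by decide
      rw [this, add_zero]
    · rw [hsplit, hC1' [y, x] hlv]
      have m1 : [x, y] ∈ (TEF hd x y 2).filter (fun le => IncidentVE [y, x] le) :=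
        Finset.mem_filter.mpr ⟨mem_TEF.mpr (te_root hxy 2), inc_root_rev⟩
      have m2 : [x, y, cy] ∉ (TEF hd x y 2).filter (fun le => IncidentVE [y, x] le) := by
        intro hm
        have hI := (Finset.mem_filter.mp hm).2
        rw [inc_23_iff] at hI
        exact hne hI.2
      have m3 : [x, y, cy, zy] ∉ (TEF hd x y 2).filter (fun le => IncidentVE [y, x] le) :=
        fun hm => not_inc_24 (Finset.mem_filter.mp hm).2
      have m4 : [y, x, cx] ∈ (TEF hd x y 2).filter (fun le => IncidentVE [y, x] le) :=
        Finset.mem_filter.mpr ⟨mem_TEF.mpr hte4, inc_drop3 cx⟩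
      have m5 : [y, x, cx, zx] ∉ (TEF hd x y 2).filter (fun le => IncidentVE [y, x] le) :=
        fun hm => not_inc_24 (Finset.mem_filter.mp hm).2
      rw [if_pos m1, if_neg m2, if_neg m3, if_pos m4, if_neg m5]
      have : (1 : ZMod 2) + 0 + 0 + 1 + 0 = 0 := by decide
      rw [this, add_zero]
    · rw [hsplit, hC1' [x, y, c] hlv]
      have m1 : [x, y] ∉ (TEF hd x y 2).filter (fun le => IncidentVE [x, y, c] le) :=
        fun hm => not_inc_xyc_root hne c (Finset.mem_filter.mp hm).2
      have m4 : [y, x, cx] ∉ (TEF hd x y 2).filter (fun le => IncidentVE [x, y, c] le) := by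
        intro hm
        have hI := (Finset.mem_filter.mp hm).2
        rw [inc_33_iff] at hI
        exact hne hI.1
      have m5 : [y, x, cx, zx] ∉ (TEF hd x y 2).filter (fun le => IncidentVE [x, y, c] le) := by
        intro hm
        have hI := (Finset.mem_filter.mp hm).2
        rw [inc_34_iff] at hI
        exact hne hI.1
      rw [if_neg m1, if_neg m4, if_neg m5]
      by_cases hc : c = cy
      · subst hc
        have m2 : [x, y, c] ∈ (TEF hd x y 2).filter (fun le => IncidentVE [x, y, c] le) :=
          Finset.mem_filter.mpr ⟨mem_TEF.mpr hte2, inc_self3 c⟩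
        have m3 : [x, y, c, zy] ∈ (TEF hd x y 2).filter (fun le => IncidentVE [x, y, c] le) :=
          Finset.mem_filter.mpr ⟨mem_TEF.mpr hte3, inc_drop4 c zy⟩
        rw [if_pos m2, if_pos m3]
        have : (0 : ZMod 2) + 1 + 1 + 0 + 0 = 0 := by decide
        rw [this, add_zero]
      · have m2 : [x, y, cy] ∉ (TEF hd x y 2).filter (fun le => IncidentVE [x, y, c] le) := by
          intro hm
          have hI := (Finset.mem_filter.mp hm).2
          rw [inc_33_iff] at hI
          exact hc hI.2.2
        have m3 : [x, y, cy, zy] ∉ (TEF hd x y 2).filter (fun le => IncidentVE [x, y, c] le) := by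
          intro hm
          have hI := (Finset.mem_filter.mp hm).2
          rw [inc_34_iff] at hI
          exact hc hI.2.2
        rw [if_neg m2, if_neg m3]
        have : (0 : ZMod 2) + 0 + 0 + 0 + 0 = 0 := by decide
        rw [this, add_zero]
    · rw [hsplit, hC1' [y, x, c] hlv]
      have m1 : [x, y] ∉ (TEF hd x y 2).filter (fun le => IncidentVE [y, x, c] le) := by
        intro hm
        have hI := (Finset.mem_filter.mp hm).2
        rcases hI with h | h | ⟨h1, h2⟩
        · simp at h
        · simp [List.dropLast] at h
        · simp at h2
      have m2 : [x, y, cy] ∉ (TEF hd x y 2).filter (fun le => IncidentVE [y, x, c] le) := by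
        intro hm
        have hI := (Finset.mem_filter.mp hm).2
        rw [inc_33_iff] at hI
        exact hne hI.1.symm
      have m3 : [x, y, cy, zy] ∉ (TEF hd x y 2).filter (fun le => IncidentVE [y, x, c] le) := by
        intro hm
        have hI := (Finset.mem_filter.mp hm).2
        rw [inc_34_iff] at hI
        exact hne hI.1.symm
      rw [if_neg m1, if_neg m2, if_neg m3]
      by_cases hc : c = cx
      · subst hc
        have m4 : [y, x, c] ∈ (TEF hd x y 2).filter (fun le => IncidentVE [y, x, c] le) :=
          Finset.mem_filter.mpr ⟨mem_TEF.mpr hte4, inc_self3 c⟩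
        have m5 : [y, x, c, zx] ∈ (TEF hd x y 2).filter (fun le => IncidentVE [y, x, c] le) :=
          Finset.mem_filter.mpr ⟨mem_TEF.mpr hte5, inc_drop4 c zx⟩
        rw [if_pos m4, if_pos m5]
        have : (0 : ZMod 2) + 0 + 0 + 1 + 1 = 0 := by decide
        rw [this, add_zero]
      · have m4 : [y, x, cx] ∉ (TEF hd x y 2).filter (fun le => IncidentVE [y, x, c] le) := by
          intro hm
          have hI := (Finset.mem_filter.mp hm).2
          rw [inc_33_iff] at hI
          exact hc hI.2.2
        have m5 : [y, x, cx, zx] ∉ (TEF hd x y 2).filter (fun le => IncidentVE [y, x, c] le) := by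
          intro hm
          have hI := (Finset.mem_filter.mp hm).2
          rw [inc_34_iff] at hI
          exact hc hI.2.2
        rw [if_neg m4, if_neg m5]
        have : (0 : ZMod 2) + 0 + 0 + 0 + 0 = 0 := by decide
        rw [this, add_zero]
  -- C0 has root label 0
  have hroot0 : C0 [x, y] = 0 := by
    show C1 [x, y] + χ [x, y] = 0
    rw [hχ1, hroot]
    decide
  -- C0 is not heavier than C1
  have hwle : cweight d x y 2 C0 ≤ cweight d x y 2 C1 := by
    rw [cweight_eq hd x y 2, cweight_eq hd x y 2, Finset.card_filter, Finset.card_filter]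
    set T : Finset (List (V d)) :=
      {[x, y], [x, y, cy], [x, y, cy, zy], [y, x, cx], [y, x, cx, zx]} with hT
    rw [← Finset.sum_filter_add_sum_filter_not (TEF hd x y 2) (· ∈ T)]
    rw [← Finset.sum_filter_add_sum_filter_not (TEF hd x y 2) (· ∈ T)
      (fun le => if C1 le = 1 then 1 else 0)]
    have heq2 : ∑ le ∈ (TEF hd x y 2).filter (fun le => ¬ le ∈ T),
        (if C0 le = 1 then (1 : ℕ) else 0) =
        ∑ le ∈ (TEF hd x y 2).filter (fun le => ¬ le ∈ T),
        (if C1 le = 1 then (1 : ℕ) else 0) := by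
      apply Finset.sum_congr rfl
      intro le hle
      have hnm := (Finset.mem_filter.mp hle).2
      simp only [hT, Finset.mem_insert, Finset.mem_singleton] at hnm
      push_neg at hnm
      have hee : C0 le = C1 le := by
        show C1 le + ((if le = [x, y] then (1 : ZMod 2) else 0) +
          (if le = [x, y, cy] then 1 else 0) + (if le = [x, y, cy, zy] then 1 else 0) +
          (if le = [y, x, cx] then 1 else 0) + (if le = [y, x, cx, zx] then 1 else 0)) = C1 le
        rw [if_neg hnm.1, if_neg hnm.2.1, if_neg hnm.2.2.1, if_neg hnm.2.2.2.1,
          if_neg hnm.2.2.2.2]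
        ring
      rw [hee]
    have heqT : (TEF hd x y 2).filter (fun le => le ∈ T) = T := by
      apply Finset.ext
      intro a
      simp only [Finset.mem_filter, hT, Finset.mem_insert, Finset.mem_singleton]
      constructor
      · exact fun h => h.2
      · rintro (rfl | rfl | rfl | rfl | rfl)
        · exact ⟨mem_TEF.mpr (te_root hxy 2), Or.inl rfl⟩
        · exact ⟨mem_TEF.mpr hte2, Or.inr (Or.inl rfl)⟩
        · exact ⟨mem_TEF.mpr hte3, Or.inr (Or.inr (Or.inl rfl))⟩
        · exact ⟨mem_TEF.mpr hte4, Or.inr (Or.inr (Or.inr (Or.inl rfl)))⟩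
        · exact ⟨mem_TEF.mpr hte5, Or.inr (Or.inr (Or.inr (Or.inr rfl)))⟩
    rw [heq2, heqT]
    have hd1 : ([x, y] : List (V d)) ∉
        ({[x, y, cy], [x, y, cy, zy], [y, x, cx], [y, x, cx, zx]} : Finset (List (V d))) := by
      simp [hne]
    have hd2 : ([x, y, cy] : List (V d)) ∉
        ({[x, y, cy, zy], [y, x, cx], [y, x, cx, zx]} : Finset (List (V d))) := by
      simp [hne]
    have hd3 : ([x, y, cy, zy] : List (V d)) ∉
        ({[y, x, cx], [y, x, cx, zx]} : Finset (List (V d))) := by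
      simp [hne]
    have hd4 : ([y, x, cx] : List (V d)) ∉ ({[y, x, cx, zx]} : Finset (List (V d))) := by
      simp
    rw [hT, Finset.sum_insert hd1, Finset.sum_insert hd2, Finset.sum_insert hd3,
      Finset.sum_insert hd4, Finset.sum_singleton,
      Finset.sum_insert hd1, Finset.sum_insert hd2, Finset.sum_insert hd3,
      Finset.sum_insert hd4, Finset.sum_singleton]
    have e2 : C0 [x, y, cy] = C1 [x, y, cy] + 1 := by
      show C1 [x, y, cy] + χ [x, y, cy] = _
      rw [hχ2]
    have e3 : C0 [x, y, cy, zy] = C1 [x, y, cy, zy] + 1 := by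
      show C1 [x, y, cy, zy] + χ [x, y, cy, zy] = _
      rw [hχ3]
    have e4 : C0 [y, x, cx] = C1 [y, x, cx] + 1 := by
      show C1 [y, x, cx] + χ [y, x, cx] = _
      rw [hχ4]
    have e5 : C0 [y, x, cx, zx] = C1 [y, x, cx, zx] + 1 := by
      show C1 [y, x, cx, zx] + χ [y, x, cx, zx] = _
      rw [hχ5]
    rw [hroot0, e2, e3, e4, e5, hroot]
    have hy := ind_toggle2 (C1 [x, y, cy]) (C1 [x, y, cy, zy]) hory
    have hx := ind_toggle2 (C1 [y, x, cx]) (C1 [y, x, cx, zx]) horx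
    have hz : (if (0 : ZMod 2) = 1 then (1 : ℕ) else 0) = 0 := by decide
    have ho : (if (1 : ZMod 2) = 1 then (1 : ℕ) else 0) = 1 := by decide
    rw [hz, ho]
    omega
  -- conclude
  have h0le : minW d x y 2 s 0 ≤ cweight d x y 2 C0 :=
    Nat.sInf_le ⟨C0, hcfg0, hroot0, rfl⟩
  unfold APPo
  have : minW d x y 2 s 0 ≤ minW d x y 2 s 1 := by
    calc minW d x y 2 s 0 ≤ cweight d x y 2 C0 := h0le
    _ ≤ cweight d x y 2 C1 := hwle
    _ = minW d x y 2 s 1 := hcw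
  omega

end Toggle2

/-! ### Syndrome bookkeeping and the main theorem -/

section Final
variable {d : ℕ}

lemma support_unique {e : (Toric d).edgeSet → ZMod 2} (hw : wt e = 1) :
    ∃ q0, ∀ q, e q = 1 ↔ q = q0 := by
  unfold wt at hw
  obtain ⟨hsub, ⟨q0⟩⟩ := Nat.card_eq_one_iff_unique.mp hw
  refine ⟨q0.1, fun q => ⟨fun h => ?_, fun h => h ▸ q0.2⟩⟩
  exact congrArg Subtype.val (Subsingleton.elim (⟨q, h⟩ : {q // e q = 1}) q0)

lemma synd_eq {e : (Toric d).edgeSet → ZMod 2} {q0 : (Toric d).edgeSet}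
    (hq : ∀ q, e q = 1 ↔ q = q0) (c : V d) :
    synd e c = if c ∈ (q0 : Sym2 (V d)) then 1 else 0 := by
  unfold synd
  by_cases hc : c ∈ (q0 : Sym2 (V d))
  · rw [if_pos hc, card1 (a0 := q0) ?_]
    · simp
    · intro q
      constructor
      · rintro ⟨h1, -⟩
        exact (hq q).mp h1
      · rintro rfl
        exact ⟨(hq _).mpr rfl, hc⟩
  · rw [if_neg hc, card0 ?_]
    · simp
    · rintro q ⟨h1, h2⟩
      rw [(hq q).mp h1] at h2
      exact hc h2

lemma zmod2_eq_zero_of_ne_one {a : ZMod 2} (h : a ≠ 1) : a = 0 := (zmod_ne_one_iff a).mp h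

lemma hatE_eq (hd : 3 ≤ d) {e : (Toric d).edgeSet → ZMod 2} {q0 : (Toric d).edgeSet}
    {a0 b0 : V d} (hq : ∀ q, e q = 1 ↔ q = q0) (hab : (q0 : Sym2 (V d)) = s(a0, b0))
    {i : ℕ} (hi : i = 1 ∨ i = 2) : hatE d (synd e) i = e := by
  have hadj0 : (Toric d).Adj a0 b0 := (SimpleGraph.mem_edgeSet _).mp (hab ▸ q0.2)
  have hne0 : a0 ≠ b0 := hadj0.ne
  have hs : ∀ c, synd e c = 1 ↔ (c = a0 ∨ c = b0) := by
    intro c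
    rw [synd_eq hq c, hab]
    constructor
    · intro h
      by_contra hcm
      rw [if_neg (fun hmem => hcm (Sym2.mem_iff.mp hmem))] at h
      simp at h
    · intro h
      rw [if_pos (Sym2.mem_iff.mpr h)]
  have hs0 : ∀ c, c ≠ a0 → c ≠ b0 → synd e c = 0 := by
    intro c h1 h2
    apply zmod2_eq_zero_of_ne_one
    intro h
    rcases (hs c).mp h with rfl | rfl
    · exact h1 rfl
    · exact h2 rfl
  funext q
  obtain ⟨x, y, hxyv⟩ : ∃ x y, (q : Sym2 (V d)) = s(x, y) := by
    induction (q : Sym2 (V d)) using Sym2.ind with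
    | _ x y => exact ⟨x, y, rfl⟩
  have hxy : (Toric d).Adj x y := (SimpleGraph.mem_edgeSet _).mp (hxyv ▸ q.2)
  unfold hatE
  rw [hxyv]
  unfold APP
  rw [Sym2.lift_mk]
  simp only []
  by_cases hqq : q = q0
  · -- the error edge: APP < 0
    have hvv : s(x, y) = s(a0, b0) := by rw [← hxyv, hqq, hab]
    have hsx : synd e x = 1 := by
      rcases Sym2.eq_iff.mp hvv with ⟨rfl, rfl⟩ | ⟨rfl, rfl⟩
      · exact (hs _).mpr (Or.inl rfl)
      · exact (hs _).mpr (Or.inr rfl)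
    have hsy : synd e y = 1 := by
      rcases Sym2.eq_iff.mp hvv with ⟨rfl, rfl⟩ | ⟨rfl, rfl⟩
      · exact (hs _).mpr (Or.inr rfl)
      · exact (hs _).mpr (Or.inl rfl)
    have hs0' : ∀ c, c ≠ x → c ≠ y → synd e c = 0 := by
      intro c h1 h2
      rcases Sym2.eq_iff.mp hvv with ⟨rfl, rfl⟩ | ⟨rfl, rfl⟩
      · exact hs0 c h1 h2
      · exact hs0 c h2 h1
    have hneg : APPo d (synd e) i x y < 0 := APPo_neg hd hxy hsy hsx hs0' hi
    rw [if_pos (lt_of_le_of_lt (min_le_left _ _) hneg), (hq q).mpr hqq]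
  · -- a non-error edge: APP ≥ 0
    have hnb : ¬(synd e x = 1 ∧ synd e y = 1) := by
      rintro ⟨h1, h2⟩
      apply hqq
      apply Subtype.ext
      rw [hxyv, hab]
      rcases (hs x).mp h1 with rfl | rfl <;> rcases (hs y).mp h2 with h | h
      · exact absurd h hxy.ne'
      · rw [h]
      · rw [h, Sym2.eq_swap]
      · exact absurd h hxy.ne'
    have hpy : ∀ u v : V d, v = a0 ∨ v = b0 → ¬(synd e u = 1 ∧ synd e v = 1) →
        ∃ p, (Toric d).Adj v p ∧ p ≠ u ∧ synd e p = 1 := by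
      rintro u v hv hnb'
      have hsv : synd e v = 1 := (hs v).mpr hv
      rcases hv with rfl | rfl
      · refine ⟨b0, hadj0, ?_, (hs _).mpr (Or.inr rfl)⟩
        rintro rfl
        exact hnb' ⟨(hs _).mpr (Or.inr rfl), hsv⟩
      · refine ⟨a0, hadj0.symm, ?_, (hs _).mpr (Or.inl rfl)⟩
        rintro rfl
        exact hnb' ⟨(hs _).mpr (Or.inl rfl), hsv⟩
    have hpart : ∀ u v : V d, ¬(synd e u = 1 ∧ synd e v = 1) → (synd e v = 1 →
        ∃ p, (Toric d).Adj v p ∧ p ≠ u ∧ synd e p = 1) := by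
      intro u v hnb' h1
      exact hpy u v ((hs v).mp h1) hnb'
    have hnb' : ¬(synd e y = 1 ∧ synd e x = 1) := fun h => hnb ⟨h.2, h.1⟩
    have hge1 : 0 ≤ APPo d (synd e) i x y := by
      rcases hi with rfl | rfl
      · exact APPo_nonneg_1 hd hxy hnb
      · exact APPo_nonneg_2 hd hxy hnb (hpart x y hnb) (hpart y x hnb')
    have hge2 : 0 ≤ APPo d (synd e) i y x := by
      rcases hi with rfl | rfl
      · exact APPo_nonneg_1 hd hxy.symm hnb'
      · exact APPo_nonneg_2 hd hxy.symm hnb' (hpart y x hnb') (hpart x y hnb)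
    rw [if_neg (not_lt.mpr (le_min hge1 hge2))]
    exact (zmod2_eq_zero_of_ne_one (fun h => hqq ((hq q).mp h))).symm

lemma not_degenerate (hd : 3 ≤ d) {e : (Toric d).edgeSet → ZMod 2}
    {q0 : (Toric d).edgeSet} {a0 b0 : V d} (hq : ∀ q, e q = 1 ↔ q = q0)
    (hab : (q0 : Sym2 (V d)) = s(a0, b0)) (hw : wt e = 1) : ¬ Degenerate e := by
  haveI : NeZero d := ⟨by omega⟩
  rintro ⟨e', hne, hwt, hsynd⟩
  have ha0 : a0 ∈ (q0 : Sym2 (V d)) := hab ▸ Sym2.mem_mk_left a0 b0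
  rw [hw] at hwt
  interval_cases h : wt e'
  · -- weight 0 : empty syndrome
    have hempty : ∀ q, e' q ≠ 1 := by
      intro q hq1
      unfold wt at h
      have hne0 : Nat.card {q : (Toric d).edgeSet // e' q = 1} ≠ 0 :=
        Nat.card_ne_zero.mpr ⟨⟨⟨q, hq1⟩⟩, Subtype.finite⟩
      exact hne0 h
    have h1 : synd e' a0 = 0 := by
      unfold synd
      rw [card0 (fun q hq1 => hempty q hq1.1)]
      simp
    have h2 : synd e a0 = 1 := by
      rw [synd_eq hq a0, if_pos ha0]
    rw [hsynd, h2] at h1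
    simp at h1
  · -- weight 1 : same edge
    obtain ⟨q1, hq1⟩ := support_unique h
    have hval : (q1 : Sym2 (V d)) = (q0 : Sym2 (V d)) := by
      apply Sym2.ext
      intro z
      have hz1 : synd e' z = (if z ∈ (q1 : Sym2 (V d)) then 1 else 0) := synd_eq hq1 z
      have hz0 : synd e z = (if z ∈ (q0 : Sym2 (V d)) then 1 else 0) := synd_eq hq z
      rw [hsynd, hz0] at hz1
      constructor
      · intro hm
        by_contra hm0
        rw [if_neg hm0, if_pos hm] at hz1
        simp at hz1
      · intro hm
        by_contra hm1
        rw [if_pos hm, if_neg hm1] at hz1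
        simp at hz1
    have hq10 : q1 = q0 := Subtype.ext hval
    apply hne
    funext q
    by_cases hqe : q = q0
    · rw [(hq1 q).mpr (hq10 ▸ hqe), (hq q).mpr hqe]
    · rw [zmod2_eq_zero_of_ne_one (fun h1 => hqe (hq10 ▸ (hq1 q).mp h1)),
        zmod2_eq_zero_of_ne_one (fun h1 => hqe ((hq q).mp h1))]

end Final

/-- **Claim (weight-1 errors are decoded in one iteration).** -/
theorem weight1_decoded (d : ℕ) (hd : 3 ≤ d)
    (e : (Toric d).edgeSet → ZMod 2) (hw : wt e = 1) :
    ¬ Degenerate e ∧ DecodedIn d (synd e) 1 ∧ hatE d (synd e) 1 = e ∧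
      (5 ≤ d → hatE d (synd e) 2 = e) := by
  obtain ⟨q0, hq⟩ := support_unique hw
  obtain ⟨a0, b0, hab⟩ : ∃ a b, (q0 : Sym2 (V d)) = s(a, b) := by
    induction (q0 : Sym2 (V d)) using Sym2.ind with
    | _ x y => exact ⟨x, y, rfl⟩
  have h1 : hatE d (synd e) 1 = e := hatE_eq hd hq hab (Or.inl rfl)
  have h2 : hatE d (synd e) 2 = e := hatE_eq hd hq hab (Or.inr rfl)
  exact ⟨not_degenerate hd hq hab hw,
    ⟨le_refl 1, by rw [h1], fun j hj1 hj2 => absurd hj2 (by omega)⟩,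
    h1, fun _ => h2⟩

end ToricMS
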